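/- arXiv:1305.5499 — 6 statements merged into one kernel-verified Lean document; each statement's English description precedes it below -/
import Mathlib

section
/- If X is a flag abstract simplicial complex and η = {s,t} is an edge of X, then the edge subdivision Sub_η(X) (with new vertex r) is also flag. -/
/-- An abstract simplicial complex: a collection of finite subsets closed under subsets. -/
def IsComplex {V : Type*} (X : Set (Finset V)) : Prop :=
  ∀ σ ∈ X, ∀ τ : Finset V, τ ⊆ σ → τ ∈ X

/-- The link of a face `η` in `X`. -/
def linkC {V : Type*} [DecidableEq V] (X : Set (Finset V)) (η : Finset V) : Set (Finset V) :=
  {ρ | ρ ∈ X ∧ η ∪ ρ ∈ X ∧ Disjoint η ρ}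

/-- The edge subdivision of `X` along the edge `{s, t}`, with new vertex `r`. -/
def edgeSubdiv {V : Type*} [DecidableEq V] (X : Set (Finset V)) (s t r : V) :
    Set (Finset V) :=
  {σ | σ ∈ X ∧ ¬ ({s, t} : Finset V) ⊆ σ} ∪
    {τ | ∃ σ ∈ linkC X {s, t},
      τ = σ ∪ {r} ∨ τ = σ ∪ ({r, s} : Finset V) ∨ τ = σ ∪ ({r, t} : Finset V)}

/-- A flag simplicial complex: every clique in the 1-skeleton is a face. -/
def IsFlag {V : Type*} [DecidableEq V] (X : Set (Finset V)) : Prop :=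
  ∀ T : Finset V, (∀ v ∈ T, ({v} : Finset V) ∈ X) →
    (∀ u ∈ T, ∀ v ∈ T, u ≠ v → ({u, v} : Finset V) ∈ X) → T ∈ X

/-- the edge subdivision of a flag complex is flag. -/
theorem edgeSubdiv_isFlag {V : Type*} [DecidableEq V] (X : Set (Finset V))
    (hX : IsComplex X) (hflag : IsFlag X) (s t r : V) (hst : s ≠ t)
    (hedge : ({s, t} : Finset V) ∈ X) (hr : ∀ σ ∈ X, r ∉ σ) :
    IsFlag (edgeSubdiv X s t r) := by
  classical
  intro T hvT heT
  have hrst : r ∉ ({s, t} : Finset V) := hr _ hedge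
  have hrs : r ≠ s := by intro h; apply hrst; simp [h]
  have hrt : r ≠ t := by intro h; apply hrst; simp [h]
  -- edges of T not containing r are honest edges of X (and not {s,t})
  have hedgeX : ∀ u ∈ T, ∀ v ∈ T, u ≠ v → u ≠ r → v ≠ r →
      ({u, v} : Finset V) ∈ X ∧ ¬ ({s, t} : Finset V) ⊆ ({u, v} : Finset V) := by
    intro u hu v hv huv hur hvr
    rcases heT u hu v hv huv with ⟨h1, h2⟩ | ⟨σ, hσ, h⟩
    · exact ⟨h1, h2⟩
    · exfalso
      rcases h with h | h | h <;>
      · have hrm : r ∈ ({u, v} : Finset V) := by rw [h]; simp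
        simp only [Finset.mem_insert, Finset.mem_singleton] at hrm
        rcases hrm with h' | h'
        · exact hur h'.symm
        · exact hvr h'.symm
  have hvX : ∀ v ∈ T, v ≠ r → ({v} : Finset V) ∈ X := by
    intro v hv hvr
    rcases hvT v hv with ⟨h1, _⟩ | ⟨σ, hσ, h⟩
    · exact h1
    · exfalso
      rcases h with h | h | h <;>
      · have hrm : r ∈ ({v} : Finset V) := by rw [h]; simp
        simp only [Finset.mem_singleton] at hrm
        exact hvr hrm.symm
  have hstT : ¬ (s ∈ T ∧ t ∈ T) := by
    rintro ⟨hs, ht⟩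
    exact (hedgeX s hs t ht hst hrs.symm hrt.symm).2 (Finset.Subset.refl _)
  by_cases hrT : r ∈ T
  · -- trichotomy for vertices of T other than r
    have htri : ∀ v ∈ T, v ≠ r → v = s ∨ v = t ∨ ({v} : Finset V) ∈ linkC X {s, t} := by
      intro v hv hvr
      rcases heT v hv r hrT hvr with ⟨h1, _⟩ | ⟨σ, hσ, h⟩
      · exact absurd (by simp : r ∈ ({v, r} : Finset V)) (hr _ h1)
      · have hrσ : r ∉ σ := hr σ hσ.1
        rcases h with h | h | h
        · right; right
          have hσv : σ = {v} := by
            apply Finset.Subset.antisymm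
            · intro x hx
              have hx' : x ∈ ({v, r} : Finset V) := by
                rw [h]; exact Finset.mem_union_left _ hx
              simp only [Finset.mem_insert, Finset.mem_singleton] at hx'
              rcases hx' with rfl | rfl
              · simp
              · exact absurd hx hrσ
            · intro x hx
              simp only [Finset.mem_singleton] at hx
              subst hx
              have : x ∈ σ ∪ {r} := by rw [← h]; simp
              simp only [Finset.mem_union, Finset.mem_singleton] at this
              rcases this with h' | h'
              · exact h'
              · exact absurd h' hvr
          rwa [← hσv]
        · left
          have hs' : s ∈ ({v, r} : Finset V) := by rw [h]; simp
          simp only [Finset.mem_insert, Finset.mem_singleton] at hs'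
          rcases hs' with h' | h'
          · exact h'.symm
          · exact absurd h'.symm hrs
        · right; left
          have ht' : t ∈ ({v, r} : Finset V) := by rw [h]; simp
          simp only [Finset.mem_insert, Finset.mem_singleton] at ht'
          rcases ht' with h' | h'
          · exact h'.symm
          · exact absurd h'.symm hrt
    set σ₀ : Finset V := T \ {r, s, t} with hσ₀def
    have hmem₀ : ∀ v, v ∈ σ₀ ↔ v ∈ T ∧ v ≠ r ∧ v ≠ s ∧ v ≠ t := by
      intro v; simp [hσ₀def, and_assoc]
    -- every vertex of σ₀ is in the link
    have hlinkv : ∀ v ∈ σ₀, ({v} : Finset V) ∈ linkC X {s, t} := by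
      intro v hv
      rw [hmem₀] at hv
      rcases htri v hv.1 hv.2.1 with h | h | h
      · exact absurd h hv.2.2.1
      · exact absurd h hv.2.2.2
      · exact h
    -- the big face {s,t} ∪ σ₀ is in X, by flagness
    have hbig : ({s, t} : Finset V) ∪ σ₀ ∈ X := by
      apply hflag
      · intro v hv
        simp only [Finset.mem_union, Finset.mem_insert, Finset.mem_singleton] at hv
        rcases hv with (rfl | rfl) | hv
        · exact hX _ hedge _ (by simp)
        · exact hX _ hedge _ (by simp)
        · exact (hlinkv v hv).1
      · intro u hu v hv huv
        simp only [Finset.mem_union, Finset.mem_insert, Finset.mem_singleton] at hu hv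
        rcases hu with (hu | hu) | hu <;> rcases hv with (hv | hv) | hv
        · exact absurd (hu.trans hv.symm) huv
        · subst hu; subst hv; exact hedge
        · -- {s, v}, v ∈ σ₀
          subst hu
          have := (hlinkv v hv).2.1
          exact hX _ this _ (by intro x hx; simp at hx ⊢; tauto)
        · subst hu; subst hv
          rw [Finset.pair_comm]; exact hedge
        · exact absurd (hu.trans hv.symm) huv
        · subst hu
          have := (hlinkv v hv).2.1
          exact hX _ this _ (by intro x hx; simp at hx ⊢; tauto)
        · subst hv
          have := (hlinkv u hu).2.1
          exact hX _ this _ (by intro x hx; simp at hx ⊢; tauto)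
        · subst hv
          have := (hlinkv u hu).2.1
          exact hX _ this _ (by intro x hx; simp at hx ⊢; tauto)
        · rw [hmem₀] at hu hv
          exact (hedgeX u hu.1 v hv.1 huv hu.2.1 hv.2.1).1
    have hσ₀link : σ₀ ∈ linkC X {s, t} := by
      refine ⟨hX _ hbig _ Finset.subset_union_right, hbig, ?_⟩
      rw [Finset.disjoint_left]
      intro a ha ha'
      rw [hmem₀] at ha'
      simp only [Finset.mem_insert, Finset.mem_singleton] at ha
      rcases ha with rfl | rfl
      · exact ha'.2.2.1 rfl
      · exact ha'.2.2.2 rfl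
    right
    refine ⟨σ₀, hσ₀link, ?_⟩
    by_cases hsT : s ∈ T
    · right; left
      have htT : t ∉ T := fun h => hstT ⟨hsT, h⟩
      ext v
      simp only [Finset.mem_union, Finset.mem_insert, Finset.mem_singleton, hmem₀]
      constructor
      · intro hv
        by_cases h1 : v = r
        · tauto
        by_cases h2 : v = s
        · tauto
        have h3 : v ≠ t := fun h => htT (h ▸ hv)
        tauto
      · rintro (⟨hv, _⟩ | rfl | rfl)
        · exact hv
        · exact hrT
        · exact hsT
    · by_cases htT : t ∈ T
      · right; right
        ext v
        simp only [Finset.mem_union, Finset.mem_insert, Finset.mem_singleton, hmem₀]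
        constructor
        · intro hv
          by_cases h1 : v = r
          · tauto
          by_cases h2 : v = t
          · tauto
          have h3 : v ≠ s := fun h => hsT (h ▸ hv)
          tauto
        · rintro (⟨hv, _⟩ | rfl | rfl)
          · exact hv
          · exact hrT
          · exact htT
      · left
        ext v
        simp only [Finset.mem_union, Finset.mem_singleton, hmem₀]
        constructor
        · intro hv
          by_cases h1 : v = r
          · tauto
          have h2 : v ≠ s := fun h => hsT (h ▸ hv)
          have h3 : v ≠ t := fun h => htT (h ▸ hv)
          tauto
        · rintro (⟨hv, _⟩ | rfl)
          · exact hv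
          · exact hrT
  · -- r ∉ T : T is an old face
    left
    have hne : ∀ v ∈ T, v ≠ r := fun v hv h => hrT (h ▸ hv)
    refine ⟨hflag T (fun v hv => hvX v hv (hne v hv))
      (fun u hu v hv huv => (hedgeX u hu v hv huv (hne u hu) (hne v hv)).1), ?_⟩
    intro hsub
    exact hstT ⟨hsub (by simp), hsub (by simp)⟩
end

section
/- Let X be a finite abstract simplicial complex of dimension n−1 with f-vector (f₀,…,f_{n−1}) (with f₋₁ = 1) and let η be an edge of X with link L := Lk_X(η), a complex of dimension n−3. Then the H-polynomial of the edge subdivision satisfies H(Sub_η(X))(α,t) = H(X)(α,t) + α·t·H(L)(α,t), where the H-polynomial of an (n−1)-dimensional complex Y with h-vector (h₀,…,h_n) is H(Y)(α,t) = Σ_{k=0}^{n} h_k α^k t^{n−k}, and the h-vector is defined by Σ h_k s^{n−k} = Σ_{i=−1}^{n−1} f_i (s−1)^{n−1−i}. -/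
/-- The number of faces of `Y` of cardinality `c`. -/
noncomputable def fcard {V : Type*} (Y : Set (Finset V)) (c : ℕ) : ℕ :=
  {σ ∈ Y | σ.card = c}.ncard

section aux
variable {V : Type*} [DecidableEq V]


lemma fS_two (X : Set (Finset V)) (hX : IsComplex X) (hfin : X.Finite)
    (s t r : V) (hst : s ≠ t) (hedge : ({s, t} : Finset V) ∈ X)
    (hr : ∀ σ ∈ X, r ∉ σ) (c : ℕ) :
    fcard (edgeSubdiv X s t r) (c+2)
      = fcard X (c+2) + fcard (linkC X {s,t}) (c+1) + fcard (linkC X {s,t}) c := by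
  have hrst : r ∉ ({s,t}:Finset V) := hr _ hedge
  have hrs : r ≠ s := by simp at hrst; tauto
  have hrt : r ≠ t := by simp at hrst; tauto
  set L := linkC X {s,t} with hLdef
  have hLsub : L ⊆ X := fun ρ h => h.1
  have hLfin : L.Finite := hfin.subset hLsub
  have hmemL : ∀ ρ ∈ L, s ∉ ρ ∧ t ∉ ρ ∧ r ∉ ρ := by
    intro ρ hρ
    obtain ⟨h1, h2, h3⟩ := hρ
    rw [Finset.disjoint_left] at h3
    exact ⟨h3 (by simp), h3 (by simp), hr ρ h1⟩
  have hd1 : ∀ ρ ∈ L, Disjoint ρ ({r}:Finset V) := by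
    intro ρ hρ; simpa using (hmemL ρ hρ).2.2
  have hd2 : ∀ ρ ∈ L, Disjoint ρ ({r,s}:Finset V) := by
    intro ρ hρ
    rw [Finset.disjoint_right]
    intro a ha; simp at ha
    rcases ha with rfl | rfl
    · exact (hmemL ρ hρ).2.2
    · exact (hmemL ρ hρ).1
  have hd3 : ∀ ρ ∈ L, Disjoint ρ ({r,t}:Finset V) := by
    intro ρ hρ
    rw [Finset.disjoint_right]
    intro a ha; simp at ha
    rcases ha with rfl | rfl
    · exact (hmemL ρ hρ).2.2
    · exact (hmemL ρ hρ).2.1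
  have hcard1 : ∀ ρ ∈ L, (ρ ∪ {r}).card = ρ.card + 1 := by
    intro ρ hρ; rw [Finset.card_union_of_disjoint (hd1 ρ hρ)]; simp
  have hcard2 : ∀ ρ ∈ L, (ρ ∪ {r,s}).card = ρ.card + 2 := by
    intro ρ hρ; rw [Finset.card_union_of_disjoint (hd2 ρ hρ), Finset.card_pair hrs]
  have hcard3 : ∀ ρ ∈ L, (ρ ∪ {r,t}).card = ρ.card + 2 := by
    intro ρ hρ; rw [Finset.card_union_of_disjoint (hd3 ρ hρ), Finset.card_pair hrt]
  set A : Set (Finset V) := {σ | σ ∈ X ∧ σ.card = c+2 ∧ ¬ ({s,t}:Finset V) ⊆ σ} with hA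
  set C : Set (Finset V) := {σ | σ ∈ X ∧ σ.card = c+2 ∧ ({s,t}:Finset V) ⊆ σ} with hC
  set B1 : Set (Finset V) := (fun ρ => ρ ∪ {r}) '' {ρ | ρ ∈ L ∧ ρ.card = c+1} with hB1
  set B2 : Set (Finset V) := (fun ρ => ρ ∪ ({r,s}:Finset V)) '' {ρ | ρ ∈ L ∧ ρ.card = c} with hB2
  set B3 : Set (Finset V) := (fun ρ => ρ ∪ ({r,t}:Finset V)) '' {ρ | ρ ∈ L ∧ ρ.card = c} with hB3
  -- finiteness
  have hAfin : A.Finite := hfin.subset (fun σ h => h.1)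
  have hCfin : C.Finite := hfin.subset (fun σ h => h.1)
  have hB1fin : B1.Finite := ((hLfin.subset (fun ρ h => h.1)).image _)
  have hB2fin : B2.Finite := ((hLfin.subset (fun ρ h => h.1)).image _)
  have hB3fin : B3.Finite := ((hLfin.subset (fun ρ h => h.1)).image _)
  -- decomposition of the subdivision faces
  have hdecomp : {σ | σ ∈ edgeSubdiv X s t r ∧ σ.card = c+2} = A ∪ (B1 ∪ (B2 ∪ B3)) := by
    ext σ
    constructor
    · rintro ⟨hσ, hcard⟩
      rcases hσ with ⟨h1, h2⟩ | ⟨ρ, hρ, h | h | h⟩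
      · exact Or.inl ⟨h1, hcard, h2⟩
      · refine Or.inr (Or.inl ⟨ρ, ⟨hρ, ?_⟩, h.symm⟩)
        have := hcard1 ρ hρ; rw [← h] at this; omega
      · refine Or.inr (Or.inr (Or.inl ⟨ρ, ⟨hρ, ?_⟩, h.symm⟩))
        have := hcard2 ρ hρ; rw [← h] at this; omega
      · refine Or.inr (Or.inr (Or.inr ⟨ρ, ⟨hρ, ?_⟩, h.symm⟩))
        have := hcard3 ρ hρ; rw [← h] at this; omega
    · rintro (⟨h1, h2, h3⟩ | ⟨ρ, ⟨hρ, hc⟩, rfl⟩ | ⟨ρ, ⟨hρ, hc⟩, rfl⟩ | ⟨ρ, ⟨hρ, hc⟩, rfl⟩)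
      · exact ⟨Or.inl ⟨h1, h3⟩, h2⟩
      · exact ⟨Or.inr ⟨ρ, hρ, Or.inl rfl⟩, by rw [hcard1 ρ hρ, hc]⟩
      · exact ⟨Or.inr ⟨ρ, hρ, Or.inr (Or.inl rfl)⟩, by rw [hcard2 ρ hρ, hc]⟩
      · exact ⟨Or.inr ⟨ρ, hρ, Or.inr (Or.inr rfl)⟩, by rw [hcard3 ρ hρ, hc]⟩
  -- disjointness
  have hrB : ∀ σ ∈ B1 ∪ (B2 ∪ B3), r ∈ σ := by
    rintro σ (⟨ρ, _, rfl⟩ | ⟨ρ, _, rfl⟩ | ⟨ρ, _, rfl⟩) <;> simp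
  have hdAB : Disjoint A (B1 ∪ (B2 ∪ B3)) := by
    rw [Set.disjoint_left]
    intro σ hσA hσB
    exact hr σ hσA.1 (hrB σ hσB)
  have hd12 : Disjoint B1 (B2 ∪ B3) := by
    rw [Set.disjoint_left]
    rintro σ ⟨ρ, ⟨hρ, _⟩, rfl⟩ (⟨ρ', _, h⟩ | ⟨ρ', _, h⟩)
    · replace h : ρ' ∪ ({r,s}:Finset V) = ρ ∪ {r} := h
      have hs' : s ∈ ρ ∪ {r} := by rw [← h]; simp
      simp [hrs.symm] at hs'
      exact (hmemL ρ hρ).1 hs'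
    · replace h : ρ' ∪ ({r,t}:Finset V) = ρ ∪ {r} := h
      have ht' : t ∈ ρ ∪ {r} := by rw [← h]; simp
      simp [hrt.symm] at ht'
      exact (hmemL ρ hρ).2.1 ht'
  have hd23 : Disjoint B2 B3 := by
    rw [Set.disjoint_left]
    rintro σ ⟨ρ, ⟨hρ, _⟩, rfl⟩ ⟨ρ', ⟨hρ', _⟩, h⟩
    replace h : ρ' ∪ ({r,t}:Finset V) = ρ ∪ ({r,s}:Finset V) := h
    have ht' : t ∈ ρ ∪ ({r,s}:Finset V) := by rw [← h]; simp
    simp [hrt.symm, hst.symm] at ht'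
    exact (hmemL ρ hρ).2.1 ht'
  -- cardinalities of the pieces
  have hB1card : B1.ncard = fcard L (c+1) := by
    rw [hB1]
    apply Set.ncard_image_of_injOn
    intro ρ₁ h₁ ρ₂ h₂ h
    replace h : ρ₁ ∪ ({r}:Finset V) = ρ₂ ∪ {r} := h
    have h' : (ρ₁ ∪ {r}) \ {r} = (ρ₂ ∪ {r}) \ {r} := by rw [h]
    rwa [Finset.union_sdiff_cancel_right (hd1 ρ₁ h₁.1),
      Finset.union_sdiff_cancel_right (hd1 ρ₂ h₂.1)] at h'
  have hB2card : B2.ncard = fcard L c := by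
    rw [hB2]
    apply Set.ncard_image_of_injOn
    intro ρ₁ h₁ ρ₂ h₂ h
    replace h : ρ₁ ∪ ({r,s}:Finset V) = ρ₂ ∪ ({r,s}:Finset V) := h
    have h' : (ρ₁ ∪ ({r,s}:Finset V)) \ {r,s} = (ρ₂ ∪ ({r,s}:Finset V)) \ {r,s} := by rw [h]
    rwa [Finset.union_sdiff_cancel_right (hd2 ρ₁ h₁.1),
      Finset.union_sdiff_cancel_right (hd2 ρ₂ h₂.1)] at h'
  have hB3card : B3.ncard = fcard L c := by
    rw [hB3]
    apply Set.ncard_image_of_injOn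
    intro ρ₁ h₁ ρ₂ h₂ h
    replace h : ρ₁ ∪ ({r,t}:Finset V) = ρ₂ ∪ ({r,t}:Finset V) := h
    have h' : (ρ₁ ∪ ({r,t}:Finset V)) \ {r,t} = (ρ₂ ∪ ({r,t}:Finset V)) \ {r,t} := by rw [h]
    rwa [Finset.union_sdiff_cancel_right (hd3 ρ₁ h₁.1),
      Finset.union_sdiff_cancel_right (hd3 ρ₂ h₂.1)] at h'
  -- C ↔ link faces of card c
  have hCeq : C = (fun ρ => ({s,t}:Finset V) ∪ ρ) '' {ρ | ρ ∈ L ∧ ρ.card = c} := by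
    ext σ
    constructor
    · rintro ⟨h1, h2, h3⟩
      refine ⟨σ \ {s,t}, ⟨⟨hX σ h1 _ (Finset.sdiff_subset), ?_, Finset.disjoint_sdiff⟩, ?_⟩, ?_⟩
      · rwa [Finset.union_sdiff_of_subset h3]
      · rw [Finset.card_sdiff_of_subset h3, Finset.card_pair hst, h2]; omega
      · exact (Finset.union_sdiff_of_subset h3)
    · rintro ⟨ρ, ⟨⟨_, h2, h3⟩, hc⟩, rfl⟩
      refine ⟨h2, ?_, Finset.subset_union_left⟩
      rw [Finset.card_union_of_disjoint h3, Finset.card_pair hst, hc]; omega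
  have hCcard : C.ncard = fcard L c := by
    rw [hCeq]
    apply Set.ncard_image_of_injOn
    intro ρ₁ h₁ ρ₂ h₂ h
    replace h : ({s,t}:Finset V) ∪ ρ₁ = ({s,t}:Finset V) ∪ ρ₂ := h
    have h' : (({s,t}:Finset V) ∪ ρ₁) \ {s,t} = (({s,t}:Finset V) ∪ ρ₂) \ {s,t} := by rw [h]
    rwa [Finset.union_sdiff_cancel_left h₁.1.2.2,
      Finset.union_sdiff_cancel_left h₂.1.2.2] at h'
  -- X faces of card c+2 split as A ∪ C
  have hXsplit : {σ | σ ∈ X ∧ σ.card = c+2} = A ∪ C := by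
    ext σ
    constructor
    · rintro ⟨h1, h2⟩
      by_cases h : ({s,t}:Finset V) ⊆ σ
      · exact Or.inr ⟨h1, h2, h⟩
      · exact Or.inl ⟨h1, h2, h⟩
    · rintro (⟨h1, h2, _⟩ | ⟨h1, h2, _⟩) <;> exact ⟨h1, h2⟩
  have hdAC : Disjoint A C := by
    rw [Set.disjoint_left]
    rintro σ ⟨_, _, h3⟩ ⟨_, _, h3'⟩
    exact h3 h3'
  have hXcard : fcard X (c+2) = A.ncard + fcard L c := by
    show {σ | σ ∈ X ∧ σ.card = c+2}.ncard = _
    rw [hXsplit, Set.ncard_union_eq hdAC hAfin hCfin, hCcard]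
  have hScard : fcard (edgeSubdiv X s t r) (c+2)
      = A.ncard + (fcard L (c+1) + (fcard L c + fcard L c)) := by
    show {σ | σ ∈ edgeSubdiv X s t r ∧ σ.card = c+2}.ncard = _
    rw [hdecomp, Set.ncard_union_eq hdAB hAfin ((hB1fin.union (hB2fin.union hB3fin))),
      Set.ncard_union_eq hd12 hB1fin (hB2fin.union hB3fin),
      Set.ncard_union_eq hd23 hB2fin hB3fin, hB1card, hB2card, hB3card]
  omega

lemma linkC_empty (X : Set (Finset V)) (hX : IsComplex X) (s t : V)
    (hedge : ({s, t} : Finset V) ∈ X) : (∅ : Finset V) ∈ linkC X {s, t} :=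
  ⟨hX _ hedge ∅ (Finset.empty_subset _), by simpa using hedge, by simp⟩

lemma fL_zero (X : Set (Finset V)) (hX : IsComplex X) (s t : V)
    (hedge : ({s, t} : Finset V) ∈ X) : fcard (linkC X {s, t}) 0 = 1 := by
  have : {ρ | ρ ∈ linkC X {s, t} ∧ ρ.card = 0} = {(∅ : Finset V)} := by
    ext ρ
    simp only [Set.mem_setOf_eq, Set.mem_singleton_iff, Finset.card_eq_zero]
    constructor
    · rintro ⟨_, rfl⟩; rfl
    · rintro rfl; exact ⟨linkC_empty X hX s t hedge, rfl⟩
  show Set.ncard _ = 1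
  rw [this, Set.ncard_singleton]

lemma fS_one (X : Set (Finset V)) (hX : IsComplex X) (hfin : X.Finite)
    (s t r : V) (hst : s ≠ t) (hedge : ({s, t} : Finset V) ∈ X)
    (hr : ∀ σ ∈ X, r ∉ σ) :
    fcard (edgeSubdiv X s t r) 1 = fcard X 1 + fcard (linkC X {s,t}) 0 := by
  have hdecomp : {σ | σ ∈ edgeSubdiv X s t r ∧ σ.card = 1}
      = {σ | σ ∈ X ∧ σ.card = 1} ∪ {({r} : Finset V)} := by
    ext σ
    constructor
    · rintro ⟨hσ, hcard⟩
      rcases hσ with ⟨h1, _⟩ | ⟨ρ, hρ, h | h | h⟩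
      · exact Or.inl ⟨h1, hcard⟩
      · right
        have hrρ : r ∉ ρ := hr ρ hρ.1
        have : (ρ ∪ {r}).card = ρ.card + 1 := by
          rw [Finset.card_union_of_disjoint (by simpa using hrρ)]; simp
        rw [h] at hcard ⊢
        have : ρ.card = 0 := by omega
        rw [Finset.card_eq_zero] at this
        simp [this]
      · exfalso
        have hd : Disjoint ρ ({r, s} : Finset V) := by
          rw [Finset.disjoint_right]
          intro a ha
          simp at ha
          rcases ha with rfl | rfl
          · exact hr ρ hρ.1
          · exact Finset.disjoint_left.mp hρ.2.2 (by simp)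
        have : (ρ ∪ ({r, s} : Finset V)).card = ρ.card + 2 := by
          rw [Finset.card_union_of_disjoint hd, Finset.card_pair]
          rintro rfl
          exact hr _ hedge (by simp)
        rw [h] at hcard; omega
      · exfalso
        have hd : Disjoint ρ ({r, t} : Finset V) := by
          rw [Finset.disjoint_right]
          intro a ha
          simp at ha
          rcases ha with rfl | rfl
          · exact hr ρ hρ.1
          · exact Finset.disjoint_left.mp hρ.2.2 (by simp)
        have : (ρ ∪ ({r, t} : Finset V)).card = ρ.card + 2 := by
          rw [Finset.card_union_of_disjoint hd, Finset.card_pair]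
          rintro rfl
          exact hr _ hedge (by simp)
        rw [h] at hcard; omega
    · rintro (⟨h1, h2⟩ | h)
      · refine ⟨Or.inl ⟨h1, fun hsub => ?_⟩, h2⟩
        have := Finset.card_le_card hsub
        rw [Finset.card_pair hst] at this
        omega
      · rw [Set.mem_singleton_iff] at h
        subst h
        exact ⟨Or.inr ⟨∅, linkC_empty X hX s t hedge, Or.inl (by simp)⟩, by simp⟩
  have hd : Disjoint {σ | σ ∈ X ∧ σ.card = 1} ({({r} : Finset V)} : Set (Finset V)) := by
    rw [Set.disjoint_left]
    rintro σ ⟨h1, _⟩ h2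
    rw [Set.mem_singleton_iff] at h2
    subst h2
    exact hr _ h1 (by simp)
  have : fcard (edgeSubdiv X s t r) 1
      = {σ | σ ∈ X ∧ σ.card = 1}.ncard + ({({r} : Finset V)} : Set (Finset V)).ncard := by
    show Set.ncard _ = _
    rw [hdecomp, Set.ncard_union_eq hd (hfin.subset (fun σ h => h.1)) (Set.finite_singleton _)]
  rw [this, Set.ncard_singleton, fL_zero X hX s t hedge]
  rfl

lemma fS_zero (X : Set (Finset V)) (s t r : V) :
    fcard (edgeSubdiv X s t r) 0 = fcard X 0 := by
  have : {σ | σ ∈ edgeSubdiv X s t r ∧ σ.card = 0} = {σ | σ ∈ X ∧ σ.card = 0} := by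
    ext σ
    constructor
    · rintro ⟨hσ, hcard⟩
      rw [Finset.card_eq_zero] at hcard
      subst hcard
      rcases hσ with ⟨h1, _⟩ | ⟨ρ, hρ, h | h | h⟩
      · exact ⟨h1, rfl⟩
      all_goals {
        exfalso
        have : r ∈ (∅ : Finset V) := by rw [h]; simp
        simp at this }
    · rintro ⟨h1, h2⟩
      refine ⟨Or.inl ⟨h1, fun hsub => ?_⟩, h2⟩
      rw [Finset.card_eq_zero] at h2
      subst h2
      have : s ∈ (∅:Finset V) := hsub (by simp)
      simp at this
  show Set.ncard _ = Set.ncard _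
  rw [this]
end aux

open Finset in
/-- `H(Sub_η(X))(α,t) = H(X)(α,t) + α · t · H(Lk_X(η))(α,t)`, where the
`H`-polynomials are built from the `h`-vectors, which are in turn determined by the
`f`-vectors via `∑ h_k s^{n-k} = ∑ f_{c-1} (s-1)^{n-c}`. -/
theorem H_edgeSubdiv {V : Type*} [DecidableEq V] (X : Set (Finset V))
    (hX : IsComplex X) (hfin : X.Finite) (s t r : V) (hst : s ≠ t)
    (hedge : ({s, t} : Finset V) ∈ X) (hr : ∀ σ ∈ X, r ∉ σ)
    (n : ℕ) (hn : 2 ≤ n)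
    -- `X` has dimension `n - 1`:
    (hdimX : ∀ σ ∈ X, σ.card ≤ n) (hdimX' : ∃ σ ∈ X, σ.card = n)
    -- the link `L = Lk_X({s,t})` has dimension `n - 3`:
    (hdimL : ∀ σ ∈ linkC X {s, t}, σ.card ≤ n - 2)
    (hdimL' : ∃ σ ∈ linkC X {s, t}, σ.card = n - 2)
    -- the `h`-vectors of `X`, of the link `L`, and of the subdivision:
    (hvX hvL hvS : ℕ → ℝ)
    (hhX : ∀ x : ℝ, ∑ k ∈ range (n + 1), hvX k * x ^ (n - k) =
      ∑ c ∈ range (n + 1), (fcard X c : ℝ) * (x - 1) ^ (n - c))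
    (hhL : ∀ x : ℝ, ∑ k ∈ range (n - 1), hvL k * x ^ (n - 2 - k) =
      ∑ c ∈ range (n - 1), (fcard (linkC X {s, t}) c : ℝ) * (x - 1) ^ (n - 2 - c))
    (hhS : ∀ x : ℝ, ∑ k ∈ range (n + 1), hvS k * x ^ (n - k) =
      ∑ c ∈ range (n + 1), (fcard (edgeSubdiv X s t r) c : ℝ) * (x - 1) ^ (n - c)) :
    ∀ α τ : ℝ,
      ∑ k ∈ range (n + 1), hvS k * α ^ k * τ ^ (n - k) =
        (∑ k ∈ range (n + 1), hvX k * α ^ k * τ ^ (n - k)) +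
          α * τ * ∑ k ∈ range (n - 1), hvL k * α ^ k * τ ^ (n - 2 - k) := by
  obtain ⟨m, rfl⟩ : ∃ m, n = m + 2 := ⟨n - 2, by omega⟩
  have e1 : m + 2 + 1 = m + 3 := by omega
  have e2 : m + 2 - 1 = m + 1 := by omega
  have e3 : m + 2 - 2 = m := by omega
  simp only [e1, e2, e3] at hhX hhL hhS ⊢
  have hLtop : fcard (linkC X {s, t}) (m+1) = 0 := by
    have hempty : {ρ | ρ ∈ linkC X {s, t} ∧ ρ.card = m+1} = ∅ := by
      ext ρ
      simp only [Set.mem_setOf_eq, Set.mem_empty_iff_false, iff_false, not_and]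
      intro h1 h2
      have := hdimL ρ h1
      omega
    show Set.ncard _ = 0
    rw [hempty]
    exact Set.ncard_empty _
  have hf2 : ∀ c : ℕ, fcard (edgeSubdiv X s t r) (c+2)
      = fcard X (c+2) + fcard (linkC X {s,t}) (c+1) + fcard (linkC X {s,t}) c :=
    fS_two X hX hfin s t r hst hedge hr
  have hf1 : fcard (edgeSubdiv X s t r) 1 = fcard X 1 + fcard (linkC X {s,t}) 0 :=
    fS_one X hX hfin s t r hst hedge hr
  have hf0 : fcard (edgeSubdiv X s t r) 0 = fcard X 0 := fS_zero X s t r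
  have hf : ∀ u : ℝ, ∑ c ∈ range (m+3), (fcard (edgeSubdiv X s t r) c : ℝ) * u ^ (m+2-c)
      = (∑ c ∈ range (m+3), (fcard X c : ℝ) * u ^ (m+2-c))
        + (u+1) * ∑ c ∈ range (m+1), (fcard (linkC X {s,t}) c : ℝ) * u ^ (m-c) := by
    intro u
    have split : ∀ g : ℕ → ℝ, ∑ c ∈ range (m+3), g c
        = (∑ c ∈ range (m+1), g (c+2)) + g 1 + g 0 := by
      intro g
      rw [Finset.sum_range_succ' g (m+2), Finset.sum_range_succ' (fun i => g (i+1)) (m+1)]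
    rw [split (fun c => (fcard (edgeSubdiv X s t r) c : ℝ) * u ^ (m+2-c)),
        split (fun c => (fcard X c : ℝ) * u ^ (m+2-c))]
    simp only [Nat.add_sub_add_right]
    have e1 : (m+2) - 1 = m + 1 := by omega
    have e2 : (m+2) - 0 = m + 2 := by omega
    rw [e1, e2]
    have expand : ∑ c ∈ range (m+1), ((fcard (edgeSubdiv X s t r) (c+2) : ℝ)) * u ^ (m-c)
        = ∑ c ∈ range (m+1), (((fcard X (c+2) : ℝ)) * u ^ (m-c)
            + ((fcard (linkC X {s,t}) (c+1) : ℝ)) * u ^ (m-c) + ((fcard (linkC X {s,t}) c : ℝ)) * u ^ (m-c)) := by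
      refine Finset.sum_congr rfl (fun c _ => ?_)
      rw [hf2 c]; push_cast; ring
    rw [expand]
    rw [Finset.sum_add_distrib, Finset.sum_add_distrib]
    have key : (∑ c ∈ range (m+1), (fcard (linkC X {s,t}) (c+1) : ℝ) * u ^ (m-c)) + (fcard (linkC X {s,t}) 0 : ℝ) * u ^ (m+1)
        = ∑ c ∈ range (m+1), (fcard (linkC X {s,t}) c : ℝ) * u ^ (m-c) * u := by
      have rhs : ∑ c ∈ range (m+1), (fcard (linkC X {s,t}) c : ℝ) * u ^ (m-c) * u
          = ∑ c ∈ range (m+1), (fcard (linkC X {s,t}) c : ℝ) * u ^ (m+1-c) := by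
        refine Finset.sum_congr rfl (fun c hc => ?_)
        rw [Finset.mem_range] at hc
        rw [mul_assoc, ← pow_succ]
        congr 2
        omega
      rw [rhs, Finset.sum_range_succ' (fun c => (fcard (linkC X {s,t}) c : ℝ) * u ^ (m+1-c)) m]
      simp only [Nat.add_sub_add_right, Nat.sub_zero]
      rw [Finset.sum_range_succ (fun c => (fcard (linkC X {s,t}) (c+1) : ℝ) * u ^ (m-c)) m]
      rw [hLtop]
      push_cast
      ring
    rw [hf1, hf0]
    push_cast
    have this2 : u * ∑ c ∈ range (m+1), (fcard (linkC X {s,t}) c:ℝ) * u ^ (m-c)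
        = ∑ c ∈ range (m+1), (fcard (linkC X {s,t}) c:ℝ) * u^(m-c) * u := by
      rw [Finset.mul_sum]; exact Finset.sum_congr rfl fun c _ => by ring
    have this3 : (u+1) * ∑ c ∈ range (m+1), (fcard (linkC X {s,t}) c:ℝ) * u ^ (m-c)
        = u * (∑ c ∈ range (m+1), (fcard (linkC X {s,t}) c:ℝ) * u ^ (m-c))
          + ∑ c ∈ range (m+1), (fcard (linkC X {s,t}) c:ℝ) * u ^ (m-c) := by ring
    rw [this3, this2, ← key]
    ring
  have stepA : ∀ x : ℝ, ∑ k ∈ range (m+3), hvS k * x ^ (m+2-k)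
      = (∑ k ∈ range (m+3), hvX k * x ^ (m+2-k)) + x * ∑ k ∈ range (m+1), hvL k * x ^ (m-k) := by
    intro x
    rw [hhS x, hhX x, hhL x]
    linear_combination hf (x-1)
  intro α τ
  have main : (fun β : ℝ => ∑ k ∈ range (m+3), hvS k * β ^ k * τ ^ (m+2-k))
      = fun β : ℝ => (∑ k ∈ range (m+3), hvX k * β ^ k * τ ^ (m+2-k))
        + β * τ * ∑ k ∈ range (m+1), hvL k * β ^ k * τ ^ (m-k) := by
    apply Continuous.ext_on (dense_compl_singleton (0:ℝ))
    · fun_prop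
    · fun_prop
    · intro β hβ
      have hβ0 : β ≠ 0 := hβ
      have hpow : ∀ k, k ≤ m+2 → β ^ (m+2) * (τ/β) ^ (m+2-k) = β ^ k * τ ^ (m+2-k) := by
        intro k hk
        have e : β ^ (m+2) = β ^ k * β ^ (m+2-k) := by rw [← pow_add]; congr 1; omega
        rw [div_pow, e]
        field_simp
      have hpow2 : ∀ k, k ≤ m → β ^ (m+2) * ((τ/β) * (τ/β) ^ (m-k)) = β * τ * (β ^ k * τ ^ (m-k)) := by
        intro k hk
        have e : β ^ (m+2) = β ^ (k+1) * β ^ ((m-k)+1) := by rw [← pow_add]; congr 1; omega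
        rw [div_pow, e]
        field_simp
        ring
      have h := stepA (τ/β)
      show ∑ k ∈ range (m+3), hvS k * β ^ k * τ ^ (m+2-k)
          = (∑ k ∈ range (m+3), hvX k * β ^ k * τ ^ (m+2-k))
            + β * τ * ∑ k ∈ range (m+1), hvL k * β ^ k * τ ^ (m-k)
      have l1 : ∑ k ∈ range (m+3), hvS k * β ^ k * τ ^ (m+2-k)
          = β ^ (m+2) * ∑ k ∈ range (m+3), hvS k * (τ/β) ^ (m+2-k) := by
        rw [Finset.mul_sum]
        refine Finset.sum_congr rfl (fun k hk => ?_)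
        rw [Finset.mem_range] at hk
        have := hpow k (by omega)
        linear_combination (-(hvS k)) * this
      have l2 : ∑ k ∈ range (m+3), hvX k * β ^ k * τ ^ (m+2-k)
          = β ^ (m+2) * ∑ k ∈ range (m+3), hvX k * (τ/β) ^ (m+2-k) := by
        rw [Finset.mul_sum]
        refine Finset.sum_congr rfl (fun k hk => ?_)
        rw [Finset.mem_range] at hk
        have := hpow k (by omega)
        linear_combination (-(hvX k)) * this
      have l3 : β * τ * ∑ k ∈ range (m+1), hvL k * β ^ k * τ ^ (m-k)
          = β ^ (m+2) * ((τ/β) * ∑ k ∈ range (m+1), hvL k * (τ/β) ^ (m-k)) := by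
        rw [Finset.mul_sum, Finset.mul_sum, Finset.mul_sum]
        refine Finset.sum_congr rfl (fun k hk => ?_)
        rw [Finset.mem_range] at hk
        have := hpow2 k (by omega)
        linear_combination (-(hvL k)) * this
      rw [l1, l2, l3, h]
      ring
  exact congrFun main α
end

section
/- Let X be a finite abstract simplicial complex and η = {s,t} an edge of X. Then f_{k−1}(Sub_η(X)) = f_{k−1}(X) + f_{k−2}(Lk_X(η)) + f_{k−3}(Lk_X(η)) for all k ≥ 1, where f_{j}(Y) denotes the number of faces of Y of cardinality j+1 and f_{−1}(Y)=1 for nonempty Y. -/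
/-- `f_j(Y)`: the number of faces of `Y` of cardinality `j + 1` (as an integer index;
`f₋₁(Y) = 1` for any complex containing the empty face, and `f_j(Y) = 0` for `j ≤ -2`). -/
noncomputable def findex {V : Type*} (Y : Set (Finset V)) (j : ℤ) : ℕ :=
  {σ ∈ Y | (σ.card : ℤ) = j + 1}.ncard

/-- `f_{k-1}(Sub_η(X)) = f_{k-1}(X) + f_{k-2}(Lk_X(η)) + f_{k-3}(Lk_X(η))`
for all `k ≥ 1`. -/
theorem fvector_edgeSubdiv {V : Type*} [DecidableEq V] (X : Set (Finset V))
    (hX : IsComplex X) (hfin : X.Finite) (s t r : V) (hst : s ≠ t)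
    (hedge : ({s, t} : Finset V) ∈ X) (hr : ∀ σ ∈ X, r ∉ σ) :
    ∀ k : ℤ, 1 ≤ k →
      findex (edgeSubdiv X s t r) (k - 1) =
        findex X (k - 1) + findex (linkC X {s, t}) (k - 2) +
          findex (linkC X {s, t}) (k - 3) := by
  intro k hk
  have hrs : r ≠ s := fun h => hr _ hedge (by simp [h])
  have hrt : r ≠ t := fun h => hr _ hedge (by simp [h])
  set L := linkC X ({s, t} : Finset V) with hL
  have hLsub : L ⊆ X := fun σ hσ => hσ.1
  have hLfin : L.Finite := hfin.subset hLsub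
  have hmem : ∀ σ ∈ L, s ∉ σ ∧ t ∉ σ ∧ r ∉ σ := by
    intro σ hσ
    obtain ⟨h1, h2, h3⟩ := hσ
    exact ⟨Finset.disjoint_left.mp h3 (by simp), Finset.disjoint_left.mp h3 (by simp),
      hr σ h1⟩
  set A : Set (Finset V) :=
    {σ | σ ∈ X ∧ ¬ ({s, t} : Finset V) ⊆ σ ∧ (σ.card : ℤ) = k} with hA
  set B : Set (Finset V) :=
    {σ | σ ∈ X ∧ ({s, t} : Finset V) ⊆ σ ∧ (σ.card : ℤ) = k} with hB
  set L1 : Set (Finset V) := {σ ∈ L | (σ.card : ℤ) = k - 1} with hL1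
  set L2 : Set (Finset V) := {σ ∈ L | (σ.card : ℤ) = k - 2} with hL2
  set C1 : Set (Finset V) := (fun σ => σ ∪ {r}) '' L1 with hC1
  set C2 : Set (Finset V) := (fun σ => σ ∪ ({r, s} : Finset V)) '' L2 with hC2
  set C3 : Set (Finset V) := (fun σ => σ ∪ ({r, t} : Finset V)) '' L2 with hC3
  -- finiteness
  have hAfin : A.Finite := hfin.subset (fun σ hσ => hσ.1)
  have hBfin : B.Finite := hfin.subset (fun σ hσ => hσ.1)
  have hL1fin : L1.Finite := hLfin.subset (fun σ hσ => hσ.1)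
  have hL2fin : L2.Finite := hLfin.subset (fun σ hσ => hσ.1)
  have hC1fin : C1.Finite := hL1fin.image _
  have hC2fin : C2.Finite := hL2fin.image _
  have hC3fin : C3.Finite := hL2fin.image _
  -- card computations for unions
  have hcard1 : ∀ σ ∈ L, ((σ ∪ {r}).card : ℤ) = σ.card + 1 := by
    intro σ hσ
    obtain ⟨-, -, h3⟩ := hmem σ hσ
    rw [Finset.union_comm, ← Finset.insert_eq, Finset.card_insert_of_notMem h3]
    push_cast; ring
  have hdisj2 : ∀ σ ∈ L, Disjoint σ ({r, s} : Finset V) := by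
    intro σ hσ
    obtain ⟨h1, -, h3⟩ := hmem σ hσ
    simp [Finset.disjoint_insert_right, Finset.disjoint_singleton_right, h1, h3]
  have hdisj3 : ∀ σ ∈ L, Disjoint σ ({r, t} : Finset V) := by
    intro σ hσ
    obtain ⟨-, h2, h3⟩ := hmem σ hσ
    simp [Finset.disjoint_insert_right, Finset.disjoint_singleton_right, h2, h3]
  have hcard2 : ∀ σ ∈ L, ((σ ∪ ({r, s} : Finset V)).card : ℤ) = σ.card + 2 := by
    intro σ hσ
    rw [Finset.card_union_of_disjoint (hdisj2 σ hσ), Finset.card_pair hrs]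
    push_cast; ring
  have hcard3 : ∀ σ ∈ L, ((σ ∪ ({r, t} : Finset V)).card : ℤ) = σ.card + 2 := by
    intro σ hσ
    rw [Finset.card_union_of_disjoint (hdisj3 σ hσ), Finset.card_pair hrt]
    push_cast; ring
  -- the main decomposition
  have hSub : {σ ∈ edgeSubdiv X s t r | (σ.card : ℤ) = k} = A ∪ (C1 ∪ (C2 ∪ C3)) := by
    ext τ
    constructor
    · rintro ⟨hτ, hcard⟩
      rcases hτ with ⟨h1, h2⟩ | ⟨σ, hσ, rfl | rfl | rfl⟩
      · exact Or.inl ⟨h1, h2, hcard⟩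
      · refine Or.inr (Or.inl ⟨σ, ⟨hσ, ?_⟩, rfl⟩)
        have := hcard1 σ hσ; omega
      · refine Or.inr (Or.inr (Or.inl ⟨σ, ⟨hσ, ?_⟩, rfl⟩))
        have := hcard2 σ hσ; omega
      · refine Or.inr (Or.inr (Or.inr ⟨σ, ⟨hσ, ?_⟩, rfl⟩))
        have := hcard3 σ hσ; omega
    · rintro (⟨h1, h2, h3⟩ | (⟨σ, ⟨hσ, hc⟩, rfl⟩ | (⟨σ, ⟨hσ, hc⟩, rfl⟩ | ⟨σ, ⟨hσ, hc⟩, rfl⟩)))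
      · exact ⟨Or.inl ⟨h1, h2⟩, h3⟩
      · refine ⟨Or.inr ⟨σ, hσ, Or.inl rfl⟩, ?_⟩
        dsimp only; have := hcard1 σ hσ; omega
      · refine ⟨Or.inr ⟨σ, hσ, Or.inr (Or.inl rfl)⟩, ?_⟩
        dsimp only; have := hcard2 σ hσ; omega
      · refine ⟨Or.inr ⟨σ, hσ, Or.inr (Or.inr rfl)⟩, ?_⟩
        dsimp only; have := hcard3 σ hσ; omega
  -- decomposition of X faces
  have hXdec : {σ ∈ X | (σ.card : ℤ) = k} = A ∪ B := by
    ext τ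
    constructor
    · rintro ⟨h1, h2⟩
      by_cases h : ({s, t} : Finset V) ⊆ τ
      · exact Or.inr ⟨h1, h, h2⟩
      · exact Or.inl ⟨h1, h, h2⟩
    · rintro (⟨h1, h2, h3⟩ | ⟨h1, h2, h3⟩) <;> exact ⟨h1, h3⟩
  -- B is in bijection with L2
  have hBeq : B = (fun σ => σ ∪ ({s, t} : Finset V)) '' L2 := by
    ext τ
    constructor
    · rintro ⟨h1, h2, h3⟩
      refine ⟨τ \ ({s, t} : Finset V), ⟨⟨hX τ h1 _ (Finset.sdiff_subset), ?_, ?_⟩, ?_⟩, ?_⟩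
      · rwa [Finset.union_sdiff_self_eq_union, Finset.union_eq_right.mpr h2]
      · exact Finset.disjoint_sdiff
      · have : (τ \ ({s, t} : Finset V)).card = τ.card - ({s, t} : Finset V).card :=
          Finset.card_sdiff_of_subset h2
        have h2' : ({s, t} : Finset V).card = 2 := Finset.card_pair hst
        have hle : ({s, t} : Finset V).card ≤ τ.card := Finset.card_le_card h2
        omega
      · show τ \ ({s, t} : Finset V) ∪ ({s, t} : Finset V) = τ
        rw [Finset.sdiff_union_self_eq_union, Finset.union_eq_left.mpr h2]
    · rintro ⟨σ, ⟨⟨hσX, hσu, hσd⟩, hc⟩, rfl⟩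
      refine ⟨by rwa [Finset.union_comm] at hσu, Finset.subset_union_right, ?_⟩
      rw [Finset.card_union_of_disjoint hσd.symm, Finset.card_pair hst]
      omega
  -- ncard computations
  have hncB : B.ncard = L2.ncard := by
    rw [hBeq]
    apply Set.ncard_image_of_injOn
    intro σ1 h1 σ2 h2 heq
    have d1 : Disjoint σ1 ({s, t} : Finset V) := h1.1.2.2.symm
    have d2 : Disjoint σ2 ({s, t} : Finset V) := h2.1.2.2.symm
    have h := congrArg (fun τ => τ \ ({s, t} : Finset V)) heq
    dsimp only at h
    rwa [Finset.union_sdiff_cancel_right d1, Finset.union_sdiff_cancel_right d2] at h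
  have hncC1 : C1.ncard = L1.ncard := by
    apply Set.ncard_image_of_injOn
    intro σ1 h1 σ2 h2 heq
    have d1 : Disjoint σ1 ({r} : Finset V) := by
      simp [Finset.disjoint_singleton_right, (hmem σ1 h1.1).2.2]
    have d2 : Disjoint σ2 ({r} : Finset V) := by
      simp [Finset.disjoint_singleton_right, (hmem σ2 h2.1).2.2]
    have h := congrArg (fun τ => τ \ ({r} : Finset V)) heq
    dsimp only at h
    rwa [Finset.union_sdiff_cancel_right d1, Finset.union_sdiff_cancel_right d2] at h
  have hncC2 : C2.ncard = L2.ncard := by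
    apply Set.ncard_image_of_injOn
    intro σ1 h1 σ2 h2 heq
    have h := congrArg (fun τ => τ \ ({r, s} : Finset V)) heq
    dsimp only at h
    rwa [Finset.union_sdiff_cancel_right (hdisj2 σ1 h1.1),
      Finset.union_sdiff_cancel_right (hdisj2 σ2 h2.1)] at h
  have hncC3 : C3.ncard = L2.ncard := by
    apply Set.ncard_image_of_injOn
    intro σ1 h1 σ2 h2 heq
    have h := congrArg (fun τ => τ \ ({r, t} : Finset V)) heq
    dsimp only at h
    rwa [Finset.union_sdiff_cancel_right (hdisj3 σ1 h1.1),
      Finset.union_sdiff_cancel_right (hdisj3 σ2 h2.1)] at h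
  -- disjointness
  have rC : ∀ τ ∈ C1 ∪ (C2 ∪ C3), r ∈ τ := by
    rintro τ (⟨σ, -, rfl⟩ | (⟨σ, -, rfl⟩ | ⟨σ, -, rfl⟩)) <;> simp
  have dAC : Disjoint A (C1 ∪ (C2 ∪ C3)) := by
    rw [Set.disjoint_left]
    rintro τ ⟨h1, -, -⟩ hc
    exact hr τ h1 (rC τ hc)
  have dC1C23 : Disjoint C1 (C2 ∪ C3) := by
    rw [Set.disjoint_left]
    rintro τ ⟨σ, hσ, rfl⟩ (⟨σ', hσ', heq⟩ | ⟨σ', hσ', heq⟩) <;> dsimp only at heq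
    · have hs1 : s ∉ σ ∪ ({r} : Finset V) := by
        simp [(hmem σ hσ.1).1, Ne.symm hrs]
      rw [← heq] at hs1; simp at hs1
    · have ht1 : t ∉ σ ∪ ({r} : Finset V) := by
        simp [(hmem σ hσ.1).2.1, Ne.symm hrt]
      rw [← heq] at ht1; simp at ht1
  have dC2C3 : Disjoint C2 C3 := by
    rw [Set.disjoint_left]
    rintro τ ⟨σ, hσ, rfl⟩ ⟨σ', hσ', heq⟩
    dsimp only at heq
    have hs1 : s ∈ σ' ∪ ({r, t} : Finset V) := by rw [heq]; simp
    simp [(hmem σ' hσ'.1).1, Ne.symm hrs, hst] at hs1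
  have dAB : Disjoint A B := by
    rw [Set.disjoint_left]
    rintro τ ⟨-, h2, -⟩ ⟨-, h2', -⟩
    exact h2 h2'
  -- put it together
  have e1 : findex (edgeSubdiv X s t r) (k - 1) =
      A.ncard + (L1.ncard + (L2.ncard + L2.ncard)) := by
    have : k - 1 + 1 = k := by ring
    rw [findex, this, hSub, Set.ncard_union_eq dAC hAfin (hC1fin.union (hC2fin.union hC3fin)),
      Set.ncard_union_eq dC1C23 hC1fin (hC2fin.union hC3fin),
      Set.ncard_union_eq dC2C3 hC2fin hC3fin, hncC1, hncC2, hncC3]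
  have e2 : findex X (k - 1) = A.ncard + L2.ncard := by
    have : k - 1 + 1 = k := by ring
    rw [findex, this, hXdec, Set.ncard_union_eq dAB hAfin hBfin, hncB]
  have e3 : findex L (k - 2) = L1.ncard := by
    rw [findex]; congr 1; ext σ; constructor
    · rintro ⟨h1, h2⟩; exact ⟨h1, by omega⟩
    · rintro ⟨h1, h2⟩; exact ⟨h1, by omega⟩
  have e4 : findex L (k - 3) = L2.ncard := by
    rw [findex]; congr 1; ext σ; constructor
    · rintro ⟨h1, h2⟩; exact ⟨h1, by omega⟩
    · rintro ⟨h1, h2⟩; exact ⟨h1, by omega⟩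
  rw [e1, e2, e3, e4]; ring
end

section
/- Let (W,S) be a Coxeter system and π ∈ W. Let Q be a word in S containing two identical adjacent letters at positions p and p+1 (i.e., q_p = q_{p+1}). Let Q' be Q with the letter at position p deleted. Then Δ(Q;π) restricted to faces containing position p is in bijection with Δ(Q';π): T ∈ Δ(Q;π) with p ∈ T if and only if T ∖ {p} (with positions > p shifted down by one) ∈ Δ(Q';π). -/
/-! Since `p ∈ T`, the letter at position `p` never occurs in the complementary word of `T`.
The positions of `Q.eraseIdx p` embed into those of `Q` in an order-preserving way, with image
everything except `p`, carrying letters to equal letters and `T ∖ {p}` (shifted) to `T`; so the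
complementary words of `T` in `Q` and of the shifted `T ∖ {p}` in `Q.eraseIdx p` are the same
list, and one contains a reduced expression of `π` exactly when the other does. -/

/-- The alternating word `i j i j ...` of length `n`. -/
def altWord {B : Type*} (i j : B) : ℕ → List B
  | 0 => []
  | n + 1 => i :: altWord j i n

@[simp] theorem altWord_length {B : Type*} (i j : B) (n : ℕ) :
    (altWord i j n).length = n := by
  induction n generalizing i j with
  | zero => rfl
  | succ n ih => simp [altWord, ih]

/-- `L` contains a reduced expression of `π` as a (not necessarily contiguous) subword. -/
def containsRed {B W : Type*} [Group W] {M : CoxeterMatrix B} (cs : CoxeterSystem M W)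
    (π : W) (L : List B) : Prop :=
  ∃ P : List B, P.Sublist L ∧ cs.IsReduced P ∧ cs.wordProd P = π

/-- The word obtained from `Q` by deleting the letters at the positions in `T`. -/
def cword {B : Type*} (Q : List B) (T : Finset (Fin Q.length)) : List B :=
  ((List.finRange Q.length).filter (fun p => p ∉ T)).map Q.get

/-- The subword complex `Δ(Q; π)`. -/
def SWC {B W : Type*} [Group W] {M : CoxeterMatrix B} (cs : CoxeterSystem M W)
    (Q : List B) (π : W) : Set (Finset (Fin Q.length)) :=
  {T | containsRed cs π (cword Q T)}

/-- The order-preserving map from positions of `Q` to positions of `Q.eraseIdx p`: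
positions `< p` are kept, positions `≥ p` are shifted down by one. -/
def eraseShift {B : Type*} (Q : List B) (p : ℕ) (hp : p + 1 < Q.length)
    (q : Fin Q.length) : Fin (Q.eraseIdx p).length :=
  ⟨if q.val < p then q.val else q.val - 1, by
    rw [show (Q.eraseIdx p).length = Q.length - 1 from by rw [List.eraseIdx_eq_take_drop_succ]; simp; omega]
    have := q.2
    split <;> omega⟩

theorem List.map_finRange_filter_eq_filter_of_strictMono {m n : ℕ} {g : Fin m → Fin n}
    (hg : StrictMono g) (P : Fin n → Bool) (hP : ∀ q, P q → q ∈ Set.range g) :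
    ((List.finRange m).filter (P ∘ g)).map g = (List.finRange n).filter P := by
  refine List.Pairwise.eq_of_mem_iff (r := (· < ·)) ?_ ((List.pairwise_lt_finRange n).filter P) ?_
  · exact List.pairwise_map.2 (((List.pairwise_lt_finRange m).filter _).imp (hg ·))
  · intro q
    simp only [List.mem_map, List.mem_filter, List.mem_finRange, true_and, Function.comp_apply]
    refine ⟨fun ⟨i, hi, hiq⟩ => hiq ▸ hi, fun hq => ?_⟩
    obtain ⟨i, rfl⟩ := hP q hq
    exact ⟨i, hq, rfl⟩

theorem cword_eq_of_strictMono {B : Type*} {Q Q' : List B} {T : Finset (Fin Q.length)}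
    {T' : Finset (Fin Q'.length)} {g : Fin Q'.length → Fin Q.length} (hg : StrictMono g)
    (hget : ∀ i, Q'.get i = Q.get (g i)) (hmem : ∀ i, i ∈ T' ↔ g i ∈ T)
    (hrange : ∀ q, q ∉ T → q ∈ Set.range g) :
    cword Q' T' = cword Q T := by
  have hfilter : (List.finRange Q'.length).filter (fun i => i ∉ T') =
      (List.finRange Q'.length).filter ((fun q => q ∉ T) ∘ g) :=
    List.filter_congr fun i _ => by simp [hmem i]
  rw [cword, cword, hfilter,
    ← List.map_finRange_filter_eq_filter_of_strictMono hg _ (by simpa using hrange), List.map_map]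
  exact List.map_congr_left fun i _ => hget i

/-- Inverse of `eraseShift` away from `p`. -/
def eraseUnshift {B : Type*} (Q : List B) (p : ℕ) (hp : p < Q.length)
    (i : Fin (Q.eraseIdx p).length) : Fin Q.length :=
  ⟨if i.val < p then i.val else i.val + 1, by
    have := i.2
    have := List.length_eraseIdx_of_lt hp
    split <;> omega⟩

section eraseUnshift

variable {B : Type*} (Q : List B) (p : ℕ)

theorem strictMono_eraseUnshift (hp : p < Q.length) : StrictMono (eraseUnshift Q p hp) := by
  intro i j hij
  rw [Fin.lt_def] at hij ⊢
  simp only [eraseUnshift]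
  split_ifs <;> omega

theorem get_eraseIdx_eq_get_eraseUnshift (hp : p < Q.length) (i : Fin (Q.eraseIdx p).length) :
    (Q.eraseIdx p).get i = Q.get (eraseUnshift Q p hp i) := by
  simp only [List.get_eq_getElem, List.getElem_eraseIdx, eraseUnshift]
  split_ifs <;> rfl

theorem eraseUnshift_ne (hp : p < Q.length) (i : Fin (Q.eraseIdx p).length) :
    eraseUnshift Q p hp i ≠ ⟨p, hp⟩ := by
  simp only [eraseUnshift, ne_eq, Fin.mk.injEq]
  split_ifs <;> omega

variable (hp : p + 1 < Q.length)

theorem eraseShift_eraseUnshift (i : Fin (Q.eraseIdx p).length) :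
    eraseShift Q p hp (eraseUnshift Q p (Nat.lt_of_succ_lt hp) i) = i := by
  ext
  simp only [eraseShift, eraseUnshift]
  split_ifs <;> omega

theorem eraseUnshift_eraseShift {q : Fin Q.length} (hq : q ≠ ⟨p, Nat.lt_of_succ_lt hp⟩) :
    eraseUnshift Q p (Nat.lt_of_succ_lt hp) (eraseShift Q p hp q) = q := by
  simp only [ne_eq, Fin.ext_iff] at hq
  ext
  simp only [eraseShift, eraseUnshift]
  split_ifs <;> omega

theorem mem_image_eraseShift_erase_iff (T : Finset (Fin Q.length))
    (i : Fin (Q.eraseIdx p).length) :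
    i ∈ (T.erase ⟨p, Nat.lt_of_succ_lt hp⟩).image (eraseShift Q p hp) ↔
      eraseUnshift Q p (Nat.lt_of_succ_lt hp) i ∈ T := by
  simp only [Finset.mem_image, Finset.mem_erase]
  constructor
  · rintro ⟨q, ⟨hqp, hqT⟩, rfl⟩
    rwa [eraseUnshift_eraseShift Q p hp hqp]
  · intro hi
    exact ⟨_, ⟨eraseUnshift_ne Q p _ i, hi⟩, eraseShift_eraseUnshift Q p hp i⟩

theorem cword_eraseIdx {T : Finset (Fin Q.length)} (hpT : ⟨p, Nat.lt_of_succ_lt hp⟩ ∈ T) :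
    cword (Q.eraseIdx p) ((T.erase ⟨p, Nat.lt_of_succ_lt hp⟩).image (eraseShift Q p hp)) =
      cword Q T :=
  cword_eq_of_strictMono (strictMono_eraseUnshift Q p _) (get_eraseIdx_eq_get_eraseUnshift Q p _)
    (mem_image_eraseShift_erase_iff Q p hp T) fun q hq =>
      ⟨eraseShift Q p hp q, eraseUnshift_eraseShift Q p hp (ne_of_mem_of_not_mem hpT hq).symm⟩

end eraseUnshift

/-- if `Q` has two identical adjacent letters at positions `p`, `p+1` and
`Q'` is `Q` with the letter at position `p` deleted, then for any `T` containing `p`,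
`T ∈ Δ(Q; π)` if and only if `T ∖ {p}`, with positions `> p` shifted down by one, is a
face of `Δ(Q'; π)`. -/
theorem swc_erase_duplicate_letter {B W : Type*} [Group W] {M : CoxeterMatrix B}
    (cs : CoxeterSystem M W) (π : W) (Q : List B) (p : ℕ) (hp : p + 1 < Q.length) :
    ∀ T : Finset (Fin Q.length), (⟨p, by omega⟩ : Fin Q.length) ∈ T →
      (T ∈ SWC cs Q π ↔
        (T.erase ⟨p, by omega⟩).image (eraseShift Q p hp) ∈ SWC cs (Q.eraseIdx p) π) := by
  intro T hpT
  simp only [SWC, Set.mem_ofPred_eq, cword_eraseIdx Q p hp hpT]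
end

section
/- In the dihedral Coxeter group I₂(m) (m ≥ 3), let Q₁ = s₁ s₂ s₁ s₂ … be the alternating word of length m+2, and let w₀ be the longest element. Then the subword complex Δ(Q₁; w₀) is the boundary complex of an (m+2)-gon: every singleton position is a vertex, and the facets are exactly the m+2 pairs of (cyclically) consecutive positions {k, k+1} for 1 ≤ k ≤ m+1 together with {1, m+2}. -/
/-- A facet: a maximal face. -/
def IsFacet {V : Type*} (X : Set (Finset V)) (T : Finset V) : Prop :=
  T ∈ X ∧ ∀ T' ∈ X, T ⊆ T' → T = T'

section

variable {B : Type*}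

def altLetter (i j : B) (k : ℕ) : B := if Even k then i else j

theorem altLetter_succ (i j : B) (k : ℕ) : altLetter i j (k + 1) = altLetter j i k := by
  by_cases hk : Even k <;> simp [altLetter, Nat.even_add_one, hk]

theorem altLetter_add_two (i j : B) (k : ℕ) : altLetter i j (k + 2) = altLetter i j k := by
  rw [altLetter_succ, altLetter_succ]

theorem map_altLetter_range' (i j : B) (s n : ℕ) :
    (List.range' s n).map (altLetter i j) = altWord (altLetter i j s) (altLetter j i s) n := by
  induction n generalizing s i j with
  | zero => rfl
  | succ n ih => rw [List.range'_succ, List.map_cons, ih, altLetter_succ, altLetter_succ]; rfl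

theorem altWord_eq_map_range' (i j : B) (n : ℕ) :
    altWord i j n = (List.range' 0 n).map (altLetter i j) := by
  simp [map_altLetter_range', altLetter]

theorem map_altLetter_range'_add_two (i j : B) (s n : ℕ) :
    (List.range' (s + 2) n).map (altLetter i j) = (List.range' s n).map (altLetter i j) := by
  simp only [map_altLetter_range', altLetter_add_two]

theorem getElem_altWord (i j : B) (n k : ℕ) (hk : k < (altWord i j n).length) :
    (altWord i j n)[k] = altLetter i j k := by
  simp [List.getElem_of_eq (altWord_eq_map_range' i j n)]

theorem reverse_alternatingWord (i j : B) (n : ℕ) :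
    (CoxeterSystem.alternatingWord i j n).reverse = altWord j i n := by
  induction n generalizing i j with
  | zero => rfl
  | succ n ih => simp [CoxeterSystem.alternatingWord_succ, ih, altWord]

theorem cword_eq_map_filter (Q : List B) (f : ℕ → B)
    (hQ : ∀ k (hk : k < Q.length), Q[k] = f k) (T : Finset (Fin Q.length)) :
    cword Q T = ((List.range Q.length).filter (· ∉ T.map Fin.valEmbedding)).map f := by
  rw [cword, ← List.map_coe_finRange_eq_range, List.filter_map, List.map_map]
  congr 1
  · funext p; exact hQ p p.isLt
  · congr 1; funext p; simp [Fin.val_inj]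

theorem length_cword (Q : List B) (T : Finset (Fin Q.length)) :
    (cword Q T).length = Q.length - T.card := by
  rw [cword, List.length_map]
  change (Finset.univ.filter (· ∉ T)).card = _
  rw [Finset.filter_not, Finset.card_sdiff]
  simp

section SubwordComplex

variable {W : Type*} [Group W] {M : CoxeterMatrix B} (cs : CoxeterSystem M W)
  {Q : List B} {w : W} {T : Finset (Fin Q.length)}

theorem mem_SWC_of_subset {T' : Finset (Fin Q.length)} (h : T ⊆ T') (hT' : T' ∈ SWC cs Q w) :
    T ∈ SWC cs Q w := by
  obtain ⟨P, hP, hred, hprod⟩ := hT'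
  refine ⟨P, hP.trans (List.Sublist.map _ (List.monotone_filter_right _ ?_)), hred, hprod⟩
  intro p hp
  simp only [decide_eq_true_eq] at hp ⊢
  exact fun hmem => hp (h hmem)

theorem card_add_length_le_of_mem_SWC (hT : T ∈ SWC cs Q w) :
    T.card + cs.length w ≤ Q.length := by
  obtain ⟨P, hP, hred, rfl⟩ := hT
  have hlen := hP.length_le
  rw [length_cword, ← hred.eq] at hlen
  have := T.card_le_univ
  rw [Fintype.card_fin] at this
  omega

theorem mem_SWC_iff_of_card_add_length_eq (h : T.card + cs.length w = Q.length) :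
    T ∈ SWC cs Q w ↔ cs.IsReduced (cword Q T) ∧ cs.wordProd (cword Q T) = w := by
  refine ⟨fun ⟨P, hP, hred, hprod⟩ => ?_,
    fun ⟨hred, hprod⟩ => ⟨_, List.Sublist.refl _, hred, hprod⟩⟩
  have := hred.eq
  rw [hP.eq_of_length (by rw [length_cword]; subst hprod; omega)] at hred hprod
  exact ⟨hred, hprod⟩

end SubwordComplex

theorem CoxeterSystem.IsReduced.isChain_ne {W : Type*} [Group W] {M : CoxeterMatrix B}
    {cs : CoxeterSystem M W} {ω : List B} (hω : cs.IsReduced ω) : ω.IsChain (· ≠ ·) := by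
  rw [List.isChain_iff_forall_rel_of_append_cons_cons]
  rintro x _ l₁ l₂ rfl rfl
  have hcancel : cs.wordProd (l₁ ++ x :: x :: l₂) = cs.wordProd (l₁ ++ l₂) := by
    simp [cs.wordProd_append, cs.wordProd_cons, ← mul_assoc]
  have hle := cs.length_wordProd_le (l₁ ++ l₂)
  rw [← hcancel, hω.eq] at hle
  simp only [List.length_append, List.length_cons] at hle
  omega

theorem CoxeterSystem.wordProd_altWord_braid {W : Type*} [Group W] {M : CoxeterMatrix B}
    (cs : CoxeterSystem M W) (i j : B) :
    cs.wordProd (altWord i j (M i j)) = cs.wordProd (altWord j i (M i j)) := by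
  have := cs.wordProd_braidWord_eq j i
  rw [CoxeterSystem.braidWord, CoxeterSystem.braidWord, M.symmetric j i] at this
  rw [← reverse_alternatingWord, ← reverse_alternatingWord, cs.wordProd_reverse,
    cs.wordProd_reverse, this]

end

theorem isFacet_iff_of_card_le {V : Type*} {X : Set (Finset V)} {d : ℕ}
    (hle : ∀ T ∈ X, T.card ≤ d) (hext : ∀ T ∈ X, ∃ T' ∈ X, T ⊆ T' ∧ T'.card = d)
    (T : Finset V) : IsFacet X T ↔ T ∈ X ∧ T.card = d := by
  refine ⟨fun ⟨hT, hmax⟩ => ⟨hT, ?_⟩, fun ⟨hT, hcard⟩ => ⟨hT, fun T' hT' hsub =>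
    Finset.eq_of_subset_of_card_le hsub (hcard ▸ hle T' hT')⟩⟩
  obtain ⟨T', hT', hsub, hcard⟩ := hext T hT
  rwa [hmax T' hT' hsub]

theorem Finset.card_eq_two_iff_exists_lt {α : Type*} [LinearOrder α] {s : Finset α} :
    s.card = 2 ↔ ∃ a b, a < b ∧ s = {a, b} := by
  refine ⟨fun h => ?_, fun ⟨a, b, hab, hs⟩ => hs ▸ Finset.card_pair hab.ne⟩
  obtain ⟨x, y, hxy, rfl⟩ := Finset.card_eq_two.1 h
  rcases hxy.lt_or_gt with hlt | hlt
  · exact ⟨x, y, hlt, rfl⟩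
  · exact ⟨y, x, hlt, Finset.pair_comm x y⟩

theorem cons_eq_altWord_of_isChain_ne {a b : Fin 2} (hab : a ≠ b) {l : List (Fin 2)}
    (h : (a :: l).IsChain (· ≠ ·)) : a :: l = altWord a b (l.length + 1) := by
  induction l generalizing a b with
  | nil => rfl
  | cons c l ih =>
    rw [List.isChain_cons_cons] at h
    obtain rfl : c = b := by have := h.1; omega
    change a :: c :: l = a :: altWord c a (l.length + 1)
    rw [ih (Ne.symm hab) h.2]

theorem eq_altWord_or_eq_altWord_of_isChain_ne {l : List (Fin 2)} (h : l.IsChain (· ≠ ·)) :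
    l = altWord 0 1 l.length ∨ l = altWord 1 0 l.length := by
  rcases l with _ | ⟨a, l⟩
  · exact Or.inl rfl
  · fin_cases a
    · exact Or.inl (cons_eq_altWord_of_isChain_ne (by decide) h)
    · exact Or.inr (cons_eq_altWord_of_isChain_ne (by decide) h)

theorem filter_range_notMem_pair {a b n : ℕ} (hab : a < b) (hbn : b < n) :
    (List.range n).filter (· ∉ ({a, b} : Finset ℕ)) =
      List.range' 0 a ++ List.range' (a + 1) (b - a - 1) ++ List.range' (b + 1) (n - b - 1) := by
  have hsplit : List.range n = List.range' 0 a ++ a :: List.range' (a + 1) (b - a - 1) ++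
      b :: List.range' (b + 1) (n - b - 1) := by
    conv_lhs => rw [List.range_eq_range', show n = a + (b - a - 1 + 1) + (n - b - 1 + 1) by omega]
    rw [← List.range'_append_1, ← List.range'_append_1, List.range'_succ, List.range'_succ,
      show 0 + (a + (b - a - 1 + 1)) = b by omega, Nat.zero_add]
  have hkeep : ∀ s k, (∀ x, s ≤ x → x < s + k → x ≠ a ∧ x ≠ b) →
      (List.range' s k).filter (· ∉ ({a, b} : Finset ℕ)) = List.range' s k := fun s k h =>
    List.filter_eq_self.2 fun x hx => by
      simpa using h x (List.mem_range'_1.1 hx).1 (List.mem_range'_1.1 hx).2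
  rw [hsplit]
  simp only [List.filter_append, List.filter_cons]
  rw [hkeep 0 a (fun x _ _ => by omega), hkeep (a + 1) _ (fun x _ _ => by omega),
    hkeep (b + 1) _ (fun x _ _ => by omega)]
  simp

theorem exists_append_cons_add_two_of_not_adjacent {a b n : ℕ} (hab : a < b) (hbn : b < n)
    (hb : b ≠ a + 1) (hab' : ¬ (a = 0 ∧ b + 1 = n)) :
    ∃ l₁ l₂ c, List.range' 0 a ++ List.range' (a + 1) (b - a - 1) ++
      List.range' (b + 1) (n - b - 1) = l₁ ++ c :: (c + 2) :: l₂ := by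
  rcases Nat.eq_zero_or_pos a with rfl | ha
  · obtain ⟨c, rfl⟩ : ∃ c, b = c + 2 := ⟨b - 2, by omega⟩
    obtain ⟨v, rfl⟩ : ∃ v, n = c + 4 + v := ⟨n - c - 4, by omega⟩
    refine ⟨List.range' 1 c, List.range' (c + 4) v, c + 1, ?_⟩
    rw [show c + 2 - 0 - 1 = c + 1 by omega, show c + 4 + v - (c + 2) - 1 = v + 1 by omega,
      List.range'_1_concat, List.range'_succ]
    simp [Nat.add_comm 1 c]
  · obtain ⟨c, rfl⟩ : ∃ c, a = c + 1 := ⟨a - 1, by omega⟩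
    obtain ⟨u, rfl⟩ : ∃ u, b = c + 3 + u := ⟨b - c - 3, by omega⟩
    refine ⟨List.range' 0 c,
      List.range' (c + 3) u ++ List.range' (c + 3 + u + 1) (n - (c + 3 + u) - 1), c, ?_⟩
    rw [show c + 3 + u - (c + 1) - 1 = u + 1 by omega, List.range'_1_concat, List.range'_succ]
    simp

section AlternatingWord

variable {B : Type*} (i j : B) (n : ℕ) {a b : Fin (altWord i j n).length}

theorem cword_altWord_pair (hab : a < b) :
    cword (altWord i j n) {a, b} = (List.range' 0 a ++ List.range' (a + 1) (b - a - 1) ++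
      List.range' (b + 1) (n - b - 1)).map (altLetter i j) := by
  simp only [cword_eq_map_filter _ _ (getElem_altWord i j n), Finset.map_insert,
    Finset.map_singleton, Fin.valEmbedding_apply]
  rw [filter_range_notMem_pair hab b.isLt]
  simp only [altWord_length]

theorem cword_altWord_consecutive (hb : b.val = a + 1) :
    cword (altWord i j n) {a, b} = altWord i j (n - 2) := by
  have hbn : b.val < n := by simpa using b.isLt
  rw [cword_altWord_pair i j n (by simp [Fin.lt_def, hb]), hb,
    show a.val + 1 - a - 1 = 0 by omega, List.range'_zero, List.append_nil, List.map_append,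
    map_altLetter_range'_add_two, ← List.map_append, altWord_eq_map_range' i j (n - 2),
    show n - 2 = a + (n - (a + 1) - 1) by omega]
  simpa using congrArg (List.map (altLetter i j))
    (List.range'_append_1 (s := 0) (m := a) (n := n - (a + 1) - 1))

theorem cword_altWord_first_last (hab : a < b) (ha : a.val = 0) (hb : b.val + 1 = n) :
    cword (altWord i j n) {a, b} = altWord j i (n - 2) := by
  rw [cword_altWord_pair i j n hab, ha, show n - b - 1 = 0 by omega,
    show b - 0 - 1 = n - 2 by omega]
  simp [map_altLetter_range', altLetter]

theorem not_isChain_cword_altWord (hab : a < b) (hb : b.val ≠ a + 1)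
    (hab' : ¬ (a.val = 0 ∧ b.val + 1 = n)) :
    ¬ (cword (altWord i j n) {a, b}).IsChain (· ≠ ·) := by
  obtain ⟨l₁, l₂, c, hsplit⟩ :=
    exists_append_cons_add_two_of_not_adjacent hab (by simpa using b.isLt) hb hab'
  rw [cword_altWord_pair i j n hab, List.isChain_iff_forall_rel_of_append_cons_cons, hsplit]
  intro hchain
  exact hchain (by rw [List.map_append, List.map_cons, List.map_cons])
    (altLetter_add_two i j c).symm

end AlternatingWord

section Dihedral

variable {W : Type*} [Group W] {M : CoxeterMatrix (Fin 2)} (cs : CoxeterSystem M W) {m : ℕ}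
  {w : W}

theorem wordProd_altWord_eq_of_length_eq (hM : M 0 1 = m) (hw : cs.length w = m) :
    cs.wordProd (altWord 0 1 m) = w ∧ cs.wordProd (altWord 1 0 m) = w := by
  obtain ⟨ω, hω, rfl⟩ := cs.exists_isReduced w
  have hbraid := hM ▸ cs.wordProd_altWord_braid 0 1
  have hωm : ω.length = m := hω.eq ▸ hw
  rcases eq_altWord_or_eq_altWord_of_isChain_ne hω.isChain_ne with h | h <;> rw [hωm] at h <;>
    subst h
  · exact ⟨rfl, hbraid.symm⟩
  · exact ⟨hbraid, rfl⟩

theorem pair_mem_SWC_altWord_iff (hM : M 0 1 = m) (hw : cs.length w = m)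
    {a b : Fin (altWord (0 : Fin 2) 1 (m + 2)).length} (hab : a < b) :
    {a, b} ∈ SWC cs (altWord 0 1 (m + 2)) w ↔
      b.val = a + 1 ∨ (a.val = 0 ∧ b.val = m + 1) := by
  have hreduced : ∀ l : List (Fin 2), cs.wordProd l = w → l.length = m → cs.IsReduced l :=
    fun l hl hlm => by rw [CoxeterSystem.IsReduced, hl, hw, hlm]
  have hwords := wordProd_altWord_eq_of_length_eq cs hM hw
  rw [mem_SWC_iff_of_card_add_length_eq cs (by simp [Finset.card_pair hab.ne, hw]; omega)]
  constructor
  · rintro ⟨hred, -⟩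
    by_contra hne
    exact not_isChain_cword_altWord 0 1 (m + 2) hab (fun h => hne (Or.inl h))
      (fun h => hne (Or.inr ⟨h.1, by omega⟩)) hred.isChain_ne
  · rintro (hb | ⟨ha, hb⟩)
    · rw [cword_altWord_consecutive 0 1 (m + 2) hb]
      exact ⟨hreduced _ hwords.1 (altWord_length ..), hwords.1⟩
    · rw [cword_altWord_first_last 0 1 (m + 2) hab ha (by omega)]
      exact ⟨hreduced _ hwords.2 (altWord_length ..), hwords.2⟩

theorem exists_pair_mem_SWC_altWord (hM : M 0 1 = m) (hw : cs.length w = m)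
    (v : Fin (altWord (0 : Fin 2) 1 (m + 2)).length) :
    ∃ T ∈ SWC cs (altWord 0 1 (m + 2)) w, v ∈ T ∧ T.card = 2 := by
  have hv : v.val < m + 2 := by simpa using v.isLt
  by_cases hlast : v.val + 1 < m + 2
  · let v' : Fin (altWord (0 : Fin 2) 1 (m + 2)).length := ⟨v + 1, by simpa using hlast⟩
    have hlt : v < v' := Fin.lt_def.2 (Nat.lt_succ_self _)
    exact ⟨{v, v'}, (pair_mem_SWC_altWord_iff cs hM hw hlt).2 (Or.inl rfl), by simp,
      Finset.card_pair hlt.ne⟩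
  · let z : Fin (altWord (0 : Fin 2) 1 (m + 2)).length := ⟨0, by simp⟩
    have hlt : z < v := Fin.lt_def.2 (by change 0 < v.val; omega)
    exact ⟨{z, v}, (pair_mem_SWC_altWord_iff cs hM hw hlt).2 (Or.inr ⟨rfl, by omega⟩),
      by simp, Finset.card_pair hlt.ne⟩

theorem card_le_two_of_mem_SWC_altWord (hw : cs.length w = m)
    {T : Finset (Fin (altWord (0 : Fin 2) 1 (m + 2)).length)}
    (hT : T ∈ SWC cs (altWord 0 1 (m + 2)) w) : T.card ≤ 2 := by
  have := card_add_length_le_of_mem_SWC cs hT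
  simp only [hw, altWord_length] at this
  omega

theorem exists_superset_mem_SWC_altWord (hM : M 0 1 = m) (hw : cs.length w = m)
    {T : Finset (Fin (altWord (0 : Fin 2) 1 (m + 2)).length)}
    (hT : T ∈ SWC cs (altWord 0 1 (m + 2)) w) :
    ∃ T' ∈ SWC cs (altWord 0 1 (m + 2)) w, T ⊆ T' ∧ T'.card = 2 := by
  have := card_le_two_of_mem_SWC_altWord cs hw hT
  interval_cases hcard : T.card
  · obtain ⟨T', hT', -, hT'card⟩ := exists_pair_mem_SWC_altWord cs hM hw ⟨0, by simp⟩
    exact ⟨T', hT', by simp [Finset.card_eq_zero.1 hcard], hT'card⟩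
  · obtain ⟨v, rfl⟩ := Finset.card_eq_one.1 hcard
    obtain ⟨T', hT', hv, hT'card⟩ := exists_pair_mem_SWC_altWord cs hM hw v
    exact ⟨T', hT', Finset.singleton_subset_iff.2 hv, hT'card⟩
  · exact ⟨T, hT, subset_rfl, hcard⟩

end Dihedral

/-- in the dihedral group `I₂(m)` (`m ≥ 3`), for the alternating word
`Q₁ = s₁ s₂ s₁ s₂ ⋯` of length `m + 2` and the longest element `w₀`, the subword complex
`Δ(Q₁; w₀)` is the boundary complex of an `(m+2)`-gon: every position is a vertex, and
the facets are exactly the pairs of consecutive positions `{k, k+1}` together with the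
pair of the first and last positions. (Positions are 0-indexed below.) -/
theorem swc_dihedral_alternating_is_polygon {W : Type*} [Group W] (m : ℕ)
    (M : CoxeterMatrix (Fin 2)) (hM : M 0 1 = m) (cs : CoxeterSystem M W)
    (w₀ : W) (hlen : cs.length w₀ = m) :
    (∀ v : Fin ((altWord (0 : Fin 2) 1 (m + 2)).length),
        ({v} : Finset _) ∈ SWC cs (altWord (0 : Fin 2) 1 (m + 2)) w₀) ∧
      (∀ T : Finset (Fin ((altWord (0 : Fin 2) 1 (m + 2)).length)),
        IsFacet (SWC cs (altWord (0 : Fin 2) 1 (m + 2)) w₀) T ↔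
          ((∃ k : ℕ, ∃ h : k + 1 < (altWord (0 : Fin 2) 1 (m + 2)).length,
              T = {⟨k, by omega⟩, ⟨k + 1, h⟩}) ∨
            T = {⟨0, by simp⟩, ⟨m + 1, by simp⟩})) := by
  refine ⟨fun v => ?_, fun T => ?_⟩
  · obtain ⟨T, hT, hv, -⟩ := exists_pair_mem_SWC_altWord cs hM hlen v
    exact mem_SWC_of_subset cs (Finset.singleton_subset_iff.2 hv) hT
  rw [isFacet_iff_of_card_le (fun _ => card_le_two_of_mem_SWC_altWord cs hlen)
    (fun _ => exists_superset_mem_SWC_altWord cs hM hlen), Finset.card_eq_two_iff_exists_lt]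
  constructor
  · rintro ⟨hT, ⟨a, ha⟩, ⟨b, hb⟩, hab, rfl⟩
    rcases (pair_mem_SWC_altWord_iff cs hM hlen hab).1 hT with rfl | ⟨rfl, rfl⟩
    · exact Or.inl ⟨a, hb, rfl⟩
    · exact Or.inr rfl
  · rintro (⟨k, hk, rfl⟩ | rfl)
    all_goals
      refine ⟨(pair_mem_SWC_altWord_iff cs hM hlen ?_).2 ?_, _, _, ?_, rfl⟩
    all_goals simp [Fin.lt_def]
end

section
/- Let (W,S) be a Coxeter system, Q, Q' words in S, s_i, s_j ∈ S with m_{ij} = 3, and π ∈ W. Let Δ₁ = Δ(Q s_i s_j s_i Q'; π) and Δ₂ = Δ(Q s_j s_i s_j Q'; π). Let f₂ denote the position of the middle letter of the braid block in Δ₁ and g₂ that in Δ₂, and let 𝒱 identify the first position of the block in Δ₁ with the third in Δ₂ and vice versa. Then the maximal subcomplex of Δ₁ containing neither the vertex f₂ nor the edge {f₁,f₃}, and the maximal subcomplex of Δ₂ containing neither g₂ nor {g₁,g₃}, are isomorphic via the map fixing all positions of Q and Q' and sending f₁ ↦ g₃, f₃ ↦ g₁. -/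
/-- The vertex identification between positions of `Q s_i s_j s_i Q'` and positions of
`Q s_j s_i s_j Q'`: it fixes all positions of `Q` and `Q'` (and the middle position of
the braid block) and exchanges the first and third positions of the braid block
(`f₁ ↦ g₃`, `f₃ ↦ g₁`). -/
def braidSwap {B : Type*} (Q Q' : List B) (i j : B)
    (p : Fin (Q ++ i :: j :: i :: Q').length) : Fin (Q ++ j :: i :: j :: Q').length :=
  ⟨if p.val = Q.length then Q.length + 2
    else if p.val = Q.length + 2 then Q.length else p.val, by
    have h := p.2
    simp only [List.length_append, List.length_cons] at h ⊢
    split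
    · omega
    · split <;> omega⟩

-- Positions are a set of natural numbers, so that they can be shifted along concatenations.
open Classical in
noncomputable def eraseIdxs {B : Type*} (D : Set ℕ) : List B → List B
  | [] => []
  | a :: l => if 0 ∈ D then eraseIdxs ((· + 1) ⁻¹' D) l else a :: eraseIdxs ((· + 1) ⁻¹' D) l

section eraseIdxs

variable {B : Type*}

@[simp] theorem eraseIdxs_nil (D : Set ℕ) : eraseIdxs D ([] : List B) = [] := rfl

open Classical in
theorem eraseIdxs_cons (D : Set ℕ) (a : B) (l : List B) :
    eraseIdxs D (a :: l) = (if 0 ∈ D then [] else [a]) ++ eraseIdxs ((· + 1) ⁻¹' D) l := by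
  rw [eraseIdxs]; split_ifs <;> rfl

theorem eraseIdxs_append (D : Set ℕ) (X Y : List B) :
    eraseIdxs D (X ++ Y) = eraseIdxs D X ++ eraseIdxs ((· + X.length) ⁻¹' D) Y := by
  induction X generalizing D with
  | nil => rfl
  | cons a X ih =>
    simp only [List.cons_append, eraseIdxs_cons, ih, List.append_assoc, List.length_cons]
    rfl

theorem eraseIdxs_congr {D D' : Set ℕ} {L : List B}
    (h : ∀ k < L.length, k ∈ D ↔ k ∈ D') : eraseIdxs D L = eraseIdxs D' L := by
  induction L generalizing D D' with
  | nil => rfl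
  | cons a L ih =>
    rw [eraseIdxs_cons, eraseIdxs_cons, propext (h 0 (by simp))]
    exact congrArg _ (ih fun k hk => h (k + 1) (by simpa using hk))

open Classical in
theorem map_get_filter_finRange (D : Set ℕ) (L : List B) :
    ((List.finRange L.length).filter (fun p => p.val ∉ D)).map L.get = eraseIdxs D L := by
  induction L generalizing D with
  | nil => rfl
  | cons a L ih =>
    simp only [List.length_cons, List.finRange_succ, List.filter_cons, List.filter_map,
      eraseIdxs_cons, ← ih ((· + 1) ⁻¹' D)]
    by_cases h0 : 0 ∈ D <;> simp [h0, Function.comp_def]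

theorem cword_eq_eraseIdxs (L : List B) (T : Finset (Fin L.length)) :
    cword L T = eraseIdxs (Fin.val '' (T : Set (Fin L.length))) L := by
  classical
  rw [cword, ← map_get_filter_finRange]
  congr 2
  ext p
  simp [Fin.val_injective.mem_set_image]

end eraseIdxs

theorem preimage_add_preimage_swap (n : ℕ) (D : Set ℕ) :
    (· + n) ⁻¹' (Equiv.swap n (n + 2) ⁻¹' D) = Equiv.swap 0 2 ⁻¹' ((· + n) ⁻¹' D) := by
  have h (k : ℕ) : Equiv.swap n (n + 2) (k + n) = Equiv.swap 0 2 k + n := by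
    simp only [Equiv.swap_apply_def]
    split_ifs <;> omega
  ext k
  simp only [Set.mem_preimage, h]

namespace CoxeterSystem

variable {B W : Type*} [Group W] {M : CoxeterMatrix B} (cs : CoxeterSystem M W)

theorem IsReduced.infix {ω ω' : List B} (hω : cs.IsReduced ω) (h : ω' <:+: ω) :
    cs.IsReduced ω' := by
  obtain ⟨s, t, rfl⟩ := h
  simpa [List.append_assoc] using (hω.drop s.length).take ω'.length

theorem not_isReduced_simple_simple (i : B) : ¬cs.IsReduced [i, i] := by
  simp [IsReduced, wordProd_cons]

theorem wordProd_braid_of_eq_three {i j : B} (h : M i j = 3) :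
    cs.wordProd [i, j, i] = cs.wordProd [j, i, j] := by
  have := cs.wordProd_braidWord_eq i j
  rw [braidWord, braidWord, M.symmetric j i, h] at this
  simpa [alternatingWord] using this.symm

end CoxeterSystem

section containsRed

variable {B W : Type*} [Group W] {M : CoxeterMatrix B} (cs : CoxeterSystem M W)

theorem containsRed_append_append_of_forall_sublist {X Y : List B}
    (h : ∀ R, R.Sublist X → cs.IsReduced R →
      ∃ R', R'.Sublist Y ∧ R'.length = R.length ∧ cs.wordProd R' = cs.wordProd R)
    {π : W} {A C : List B} (hX : containsRed cs π (A ++ X ++ C)) :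
    containsRed cs π (A ++ Y ++ C) := by
  obtain ⟨P, hP, hred, rfl⟩ := hX
  obtain ⟨P₁₂, P₃, rfl, h₁₂, h₃⟩ := List.sublist_append_iff.mp hP
  obtain ⟨P₁, P₂, rfl, h₁, h₂⟩ := List.sublist_append_iff.mp h₁₂
  obtain ⟨R', hR', hlen, hprod⟩ := h P₂ h₂ (hred.infix cs ⟨P₁, P₃, rfl⟩)
  have hprod' : cs.wordProd (P₁ ++ R' ++ P₃) = cs.wordProd (P₁ ++ P₂ ++ P₃) := by
    simp only [cs.wordProd_append, hprod]
  refine ⟨P₁ ++ R' ++ P₃, (h₁.append hR').append h₃, ?_, hprod'⟩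
  rw [CoxeterSystem.IsReduced, hprod', hred]
  simp [hlen]

theorem containsRed_braid_of_eq_three {i j : B} (h : M i j = 3) {π : W} {A C : List B}
    (hX : containsRed cs π (A ++ [i, j, i] ++ C)) : containsRed cs π (A ++ [j, i, j] ++ C) := by
  refine containsRed_append_append_of_forall_sublist cs (fun R hR hred => ?_) hX
  have : R = [i, j, i] ∨ R = [i, i] ∨ R.Sublist [j, i, j] := by
    simp only [List.sublist_cons_iff, List.sublist_nil] at hR
    aesop
  rcases this with rfl | rfl | hR'
  · exact ⟨[j, i, j], List.Sublist.refl _, rfl, (cs.wordProd_braid_of_eq_three h).symm⟩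
  · exact absurd hred (cs.not_isReduced_simple_simple i)
  · exact ⟨R, hR', rfl, rfl⟩

theorem containsRed_braid_iff {i j : B} (h : M i j = 3) (π : W) (A C : List B) :
    containsRed cs π (A ++ [i, j, i] ++ C) ↔ containsRed cs π (A ++ [j, i, j] ++ C) :=
  ⟨containsRed_braid_of_eq_three cs h, containsRed_braid_of_eq_three cs ((M.symmetric j i).trans h)⟩

end containsRed

section braid

variable {B W : Type*} [Group W] {M : CoxeterMatrix B} (cs : CoxeterSystem M W)

theorem containsRed_append_eraseIdxs_braid_iff {i j : B} (h : M i j = 3) (π : W)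
    (A C : List B) {E : Set ℕ} (h₂ : 1 ∉ E) (h₁₃ : ¬(0 ∈ E ∧ 2 ∈ E)) :
    containsRed cs π (A ++ eraseIdxs E (i :: j :: i :: C)) ↔
      containsRed cs π (A ++ eraseIdxs (Equiv.swap 0 2 ⁻¹' E) (j :: i :: j :: C)) := by
  have hC : (· + 3) ⁻¹' (Equiv.swap 0 2 ⁻¹' E) = (· + 3) ⁻¹' E := by
    ext k
    simp only [Set.mem_preimage]
    rw [Equiv.swap_apply_of_ne_of_ne (by omega) (by omega)]
  rw [show i :: j :: i :: C = [i, j, i] ++ C from rfl,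
    show j :: i :: j :: C = [j, i, j] ++ C from rfl, eraseIdxs_append, eraseIdxs_append,
    show [i, j, i].length = 3 from rfl,
    show [j, i, j].length = 3 from rfl, hC, ← List.append_assoc, ← List.append_assoc]
  have hs : Equiv.swap 0 2 1 = 1 := Equiv.swap_apply_of_ne_of_ne (by decide) (by decide)
  by_cases h₁ : 0 ∈ E
  · have h₃ : 2 ∉ E := fun h₃ => h₁₃ ⟨h₁, h₃⟩
    simp [eraseIdxs_cons, h₁, h₂, h₃, hs]
  · by_cases h₃ : 2 ∈ E
    · simp [eraseIdxs_cons, h₁, h₂, h₃, hs]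
    · simpa [eraseIdxs_cons, h₁, h₂, h₃, hs] using
        containsRed_braid_iff cs h π A (eraseIdxs ((· + 3) ⁻¹' E) C)

theorem containsRed_eraseIdxs_braid_iff {i j : B} (h : M i j = 3) (π : W) (A C : List B)
    {D : Set ℕ} (h₂ : A.length + 1 ∉ D) (h₁₃ : ¬(A.length ∈ D ∧ A.length + 2 ∈ D)) :
    containsRed cs π (eraseIdxs D (A ++ i :: j :: i :: C)) ↔
      containsRed cs π (eraseIdxs (Equiv.swap A.length (A.length + 2) ⁻¹' D)
        (A ++ j :: i :: j :: C)) := by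
  have hA : eraseIdxs (Equiv.swap A.length (A.length + 2) ⁻¹' D) A = eraseIdxs D A :=
    eraseIdxs_congr fun k hk => by
      rw [Set.mem_preimage, Equiv.swap_apply_of_ne_of_ne (by omega) (by omega)]
  rw [eraseIdxs_append, eraseIdxs_append, hA, preimage_add_preimage_swap]
  exact containsRed_append_eraseIdxs_braid_iff cs h π _ C (by simpa [add_comm] using h₂)
    (by simpa [add_comm] using h₁₃)

end braid

theorem mk_mem_iff_mem_image_val {m k : ℕ} (hk : k < m) (T : Finset (Fin m)) :
    (⟨k, hk⟩ : Fin m) ∈ T ↔ k ∈ Fin.val '' (T : Set (Fin m)) :=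
  Fin.val_injective.mem_set_image.symm

theorem image_val_image_braidSwap {B : Type*} (Q Q' : List B) (i j : B)
    (T : Finset (Fin (Q ++ i :: j :: i :: Q').length)) :
    Fin.val '' (T.image (braidSwap Q Q' i j) : Set (Fin (Q ++ j :: i :: j :: Q').length)) =
      Equiv.swap Q.length (Q.length + 2) ⁻¹'
        (Fin.val '' (T : Set (Fin (Q ++ i :: j :: i :: Q').length))) := by
  have h : Fin.val ∘ braidSwap Q Q' i j = Equiv.swap Q.length (Q.length + 2) ∘ Fin.val :=
    funext fun p => (Equiv.swap_apply_def _ _ p.val).symm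
  rw [Finset.coe_image, ← Set.image_comp, h, Set.image_comp, Equiv.image_eq_preimage_symm,
    Equiv.symm_swap]

/-- for `m_{ij} = 3`, the maximal subcomplex of
`Δ₁ = Δ(Q s_i s_j s_i Q'; π)` containing neither the middle vertex `f₂` of the braid
block nor the edge `{f₁, f₃}`, and the analogous maximal subcomplex of
`Δ₂ = Δ(Q s_j s_i s_j Q'; π)`, are isomorphic via the map fixing all positions of `Q`
and `Q'` and sending `f₁ ↦ g₃`, `f₃ ↦ g₁`. -/
theorem swc_braid_tilde_iso {B W : Type*} [Group W] {M : CoxeterMatrix B}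
    (cs : CoxeterSystem M W) (Q Q' : List B) (i j : B) (hm : M i j = 3) (π : W) :
    ∀ T : Finset (Fin (Q ++ i :: j :: i :: Q').length),
      (T ∈ SWC cs (Q ++ i :: j :: i :: Q') π ∧
          (⟨Q.length + 1, by simp only [List.length_append, List.length_cons]; omega⟩ :
            Fin (Q ++ i :: j :: i :: Q').length) ∉ T ∧
          ¬ ({⟨Q.length, by simp only [List.length_append, List.length_cons]; omega⟩,
              ⟨Q.length + 2, by simp only [List.length_append, List.length_cons]; omega⟩} :
              Finset (Fin (Q ++ i :: j :: i :: Q').length)) ⊆ T) ↔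
        (T.image (braidSwap Q Q' i j) ∈ SWC cs (Q ++ j :: i :: j :: Q') π ∧
          (⟨Q.length + 1, by simp only [List.length_append, List.length_cons]; omega⟩ :
            Fin (Q ++ j :: i :: j :: Q').length) ∉ T.image (braidSwap Q Q' i j) ∧
          ¬ ({⟨Q.length, by simp only [List.length_append, List.length_cons]; omega⟩,
              ⟨Q.length + 2, by simp only [List.length_append, List.length_cons]; omega⟩} :
              Finset (Fin (Q ++ j :: i :: j :: Q').length)) ⊆
            T.image (braidSwap Q Q' i j)) := by
  intro T
  have hmid : Equiv.swap Q.length (Q.length + 2) (Q.length + 1) = Q.length + 1 :=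
    Equiv.swap_apply_of_ne_of_ne (by omega) (by omega)
  simp only [SWC, Set.mem_ofPred_eq, cword_eq_eraseIdxs, image_val_image_braidSwap,
    Finset.insert_subset_iff, Finset.singleton_subset_iff, mk_mem_iff_mem_image_val,
    Set.mem_preimage, Equiv.swap_apply_left, Equiv.swap_apply_right, hmid]
  rw [and_comm (a := Q.length + 2 ∈ _)]
  exact and_congr_left fun ⟨h₂, h₁₃⟩ => containsRed_eraseIdxs_braid_iff cs hm π Q Q' h₂ h₁₃
end
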